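/- arXiv:2008.04896 — 11 statements merged into one kernel-verified Lean document; each statement's English description precedes it below -/
import Mathlib

section
/- Let n ≥ 3k and k ≥ 1. If H is a k-detectable, k-uniform hypergraph on n vertices with g hyperedges, then the Kneser graph K(k,n) has a resolving set of cardinality g; in particular β(K(k,n)) ≤ g. -/
def Kneser (k n : ℕ) : SimpleGraph {s : Finset (Fin n) // s.card = k} :=
  SimpleGraph.fromRel (fun u v => Disjoint u.1 v.1)

def IsResolvingSet {V : Type*} (G : SimpleGraph V) (S : Set V) : Prop :=
  ∀ u v : V, (∀ s ∈ S, G.dist s u = G.dist s v) → u = v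

def detVal {V : Type*} [DecidableEq V] (k : ℕ) (h B : Finset V) : ℕ :=
  if (h ∩ B).card = 0 then 0 else if (h ∩ B).card = k then k else 1

def Detectable {V : Type*} [DecidableEq V] (k k' : ℕ) (E : Finset (Finset V)) : Prop :=
  ∀ B₁ B₂ : Finset V, B₁.card = k' → B₂.card = k' →
    (∀ h ∈ E, detVal k h B₁ = detVal k h B₂) → B₁ = B₂

def hdeg {V : Type*} [DecidableEq V] (E : Finset (Finset V)) (v : V) : ℕ :=
  (E.filter (fun h => v ∈ h)).card

lemma kneser_adj {k n : ℕ} {u v : {s : Finset (Fin n) // s.card = k}} :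
    (Kneser k n).Adj u v ↔ u ≠ v ∧ Disjoint u.1 v.1 := by
  simp only [Kneser, SimpleGraph.fromRel_adj, disjoint_comm]
  tauto

lemma kneser_dist {k n : ℕ} (hk : 1 ≤ k) (hn : 3 * k ≤ n)
    (u v : {s : Finset (Fin n) // s.card = k}) :
    (Kneser k n).dist u v = if u = v then 0 else if Disjoint u.1 v.1 then 1 else 2 := by
  split_ifs with h1 h2
  · rw [h1, SimpleGraph.dist_self]
  · exact SimpleGraph.dist_eq_one_iff_adj.mpr (kneser_adj.mpr ⟨h1, h2⟩)
  · have hcard : k ≤ (Finset.univ \ (u.1 ∪ v.1)).card := by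
      have hle : (u.1 ∪ v.1).card ≤ 2 * k := by
        have h := Finset.card_union_le u.1 v.1
        rw [u.2, v.2] at h; omega
      have heq : (Finset.univ \ (u.1 ∪ v.1)).card =
          n - (u.1 ∪ v.1).card := by
        rw [Finset.card_sdiff_of_subset (Finset.subset_univ _)]; simp
      have hsub : (u.1 ∪ v.1).card ≤ n := by
        have := Finset.card_le_card (Finset.subset_univ (u.1 ∪ v.1))
        simpa using this
      omega
    obtain ⟨w, hwsub, hwcard⟩ := Finset.exists_subset_card_eq hcard
    have hdw : Disjoint w (u.1 ∪ v.1) := by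
      refine Finset.disjoint_left.mpr fun a ha hb => ?_
      have := hwsub ha
      simp only [Finset.mem_sdiff] at this
      exact this.2 hb
    have hdu : Disjoint u.1 w := ((Finset.disjoint_union_right.mp hdw).1).symm
    have hdv : Disjoint w v.1 := (Finset.disjoint_union_right.mp hdw).2
    set W : {s : Finset (Fin n) // s.card = k} := ⟨w, hwcard⟩ with hW
    have hne : ∀ a b : {s : Finset (Fin n) // s.card = k},
        Disjoint a.1 b.1 → a ≠ b := by
      rintro a b hd rfl
      rw [disjoint_self] at hd
      have := a.2; rw [hd] at this; simp at this; omega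
    have a1 : (Kneser k n).Adj u W := kneser_adj.mpr ⟨hne _ _ hdu, hdu⟩
    have a2 : (Kneser k n).Adj W v := kneser_adj.mpr ⟨hne _ _ hdv, hdv⟩
    let hwalk : (Kneser k n).Walk u v :=
      SimpleGraph.Walk.cons a1 (SimpleGraph.Walk.cons a2 SimpleGraph.Walk.nil)
    have hle2 : (Kneser k n).dist u v ≤ 2 := by
      have := SimpleGraph.dist_le hwalk
      simpa [hwalk] using this
    have hne0 : (Kneser k n).dist u v ≠ 0 := by
      intro h0
      rw [SimpleGraph.dist_eq_zero_iff_eq_or_not_reachable] at h0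
      rcases h0 with h0 | h0
      · exact h1 h0
      · exact h0 ⟨hwalk⟩
    have hne1 : (Kneser k n).dist u v ≠ 1 := by
      intro h0
      rw [SimpleGraph.dist_eq_one_iff_adj, kneser_adj] at h0
      exact h2 h0.2
    omega

lemma detVal_eq {k n : ℕ} (hk : 1 ≤ k) (h B : Finset (Fin n))
    (hh : h.card = k) (hB : B.card = k) :
    detVal k h B = if h = B then k else if Disjoint h B then 0 else 1 := by
  unfold detVal
  rcases eq_or_ne h B with rfl | hne
  · rw [Finset.inter_self, hh, if_neg (by omega), if_pos rfl, if_pos rfl]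
  · rw [if_neg hne]
    by_cases hd : Disjoint h B
    · have hz : (h ∩ B).card = 0 := by
        rw [Finset.card_eq_zero]
        exact Finset.disjoint_iff_inter_eq_empty.mp hd
      rw [if_pos hd, if_pos hz]
    · rw [if_neg hd, if_neg (fun h0 => hd (Finset.disjoint_iff_inter_eq_empty.mpr
        (Finset.card_eq_zero.mp h0)))]
      rw [if_neg ?_]
      intro h0
      have hsub : h ∩ B = h :=
        Finset.eq_of_subset_of_card_le Finset.inter_subset_left (by omega)
      have hsub2 : h ⊆ B := hsub ▸ Finset.inter_subset_right
      exact hne (Finset.eq_of_subset_of_card_le hsub2 (by omega))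

theorem stmt_1 (k n g : ℕ) (hk : 1 ≤ k) (hn : 3 * k ≤ n)
    (E : Finset (Finset (Fin n))) (hunif : ∀ h ∈ E, h.card = k)
    (hdet : Detectable k k E) (hcard : E.card = g) :
    ∃ S : Finset {s : Finset (Fin n) // s.card = k},
      IsResolvingSet (Kneser k n) ↑S ∧ S.card = g := by
  classical
  refine ⟨E.attach.image (fun h => ⟨h.1, hunif h.1 h.2⟩), ?_, ?_⟩
  · intro u v hsame
    apply Subtype.ext
    apply hdet u.1 v.1 u.2 v.2
    intro h hE
    have hh : h.card = k := hunif h hE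
    have hs : (⟨h, hh⟩ : {s : Finset (Fin n) // s.card = k}) ∈
        (↑(E.attach.image (fun h => (⟨h.1, hunif h.1 h.2⟩ :
          {s : Finset (Fin n) // s.card = k}))) : Set _) := by
      simp only [Finset.coe_image, Set.mem_image, Finset.mem_coe, Finset.mem_attach]
      exact ⟨⟨h, hE⟩, by simp⟩
    have hd := hsame _ hs
    rw [kneser_dist hk hn, kneser_dist hk hn] at hd
    simp only [Subtype.ext_iff] at hd
    rw [detVal_eq hk h u.1 hh u.2, detVal_eq hk h v.1 hh v.2]
    split_ifs at hd ⊢ <;> omega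
  · rw [Finset.card_image_of_injective _ (fun a b hab => Subtype.ext
      (by simpa using congrArg Subtype.val hab)), Finset.card_attach, hcard]
end

section
/- Let n ≥ 3k and k ≥ 1. If the Kneser graph K(k,n) has a resolving set of cardinality g, then there exists a k-detectable, k-uniform hypergraph on n vertices with g hyperedges. -/
lemma detVal_eq_of_eq {V : Type*} [DecidableEq V] {k : ℕ} (hk : 1 ≤ k) {h B : Finset V}
    (hh : h.card = k) (he : h = B) : detVal k h B = k := by
  subst he
  simp only [detVal, Finset.inter_self, hh]
  rw [if_neg (by omega)]; simp

lemma eq_of_inter_card {V : Type*} [DecidableEq V] {k : ℕ} {h B : Finset V}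
    (hh : h.card = k) (hB : B.card = k) (hc : (h ∩ B).card = k) : h = B := by
  have h1 : h ∩ B = h := Finset.eq_of_subset_of_card_le Finset.inter_subset_left (by omega)
  have h2 : h ⊆ B := by rw [← h1]; exact Finset.inter_subset_right
  exact Finset.eq_of_subset_of_card_le h2 (by omega)

/-- The distance in the Kneser graph is a function of the detection value. -/
lemma dist_eq_f (k n : ℕ) (hk : 1 ≤ k) (hn : 3 * k ≤ n)
    (s u : {s : Finset (Fin n) // s.card = k}) :
    (Kneser k n).dist s u =
      (if detVal k s.1 u.1 = 0 then 1 else if detVal k s.1 u.1 = k then 0 else 2) := by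
  by_cases heq : s = u
  · rw [detVal_eq_of_eq hk s.2 (by rw [heq]), if_neg (by omega), if_pos rfl, heq,
      SimpleGraph.dist_self]
  · by_cases hd : Disjoint s.1 u.1
    · have hadj : (Kneser k n).Adj s u := by
        refine ⟨heq, Or.inl hd⟩
      rw [SimpleGraph.dist_eq_one_iff_adj.mpr hadj]
      have : detVal k s.1 u.1 = 0 := by
        simp [detVal, Finset.card_eq_zero.mpr (Finset.disjoint_iff_inter_eq_empty.mp hd)]
      rw [this, if_pos rfl]
    · -- intersecting, distinct
      have hne : s.1 ≠ u.1 := fun h => heq (Subtype.ext h)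
      have hc0 : (s.1 ∩ u.1).card ≠ 0 := by
        rw [Finset.card_ne_zero, Finset.nonempty_iff_ne_empty]
        exact fun h => hd (Finset.disjoint_iff_inter_eq_empty.mpr h)
      have hck : (s.1 ∩ u.1).card ≠ k := fun h => hne (eq_of_inter_card s.2 u.2 h)
      have hdv : detVal k s.1 u.1 = 1 := by simp [detVal, hc0, hck]
      have hk2 : 2 ≤ k := by
        rcases Nat.lt_or_ge 1 k with h | h
        · omega
        · exfalso
          have hcle : (s.1 ∩ u.1).card ≤ k := by
            calc (s.1 ∩ u.1).card ≤ s.1.card := Finset.card_le_card Finset.inter_subset_left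
            _ = k := s.2
          omega
      rw [hdv, if_neg (by omega), if_neg (by omega)]
      -- distance is 2: common neighbor exists
      have hcompl : k ≤ (s.1 ∪ u.1)ᶜ.card := by
        have h1 : (s.1 ∪ u.1).card ≤ 2 * k := by
          calc (s.1 ∪ u.1).card ≤ s.1.card + u.1.card := Finset.card_union_le _ _
          _ = 2 * k := by rw [s.2, u.2]; ring
        have h2 : (s.1 ∪ u.1)ᶜ.card = n - (s.1 ∪ u.1).card := by
          rw [Finset.card_compl, Fintype.card_fin]
        omega
      obtain ⟨c, hcsub, hcard⟩ := Finset.exists_subset_card_eq hcompl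
      set cv : {s : Finset (Fin n) // s.card = k} := ⟨c, hcard⟩ with hcv
      have hdisj : ∀ t : Finset (Fin n), t ⊆ s.1 ∪ u.1 → Disjoint t c := by
        intro t ht
        exact Finset.disjoint_left.mpr fun a ha hac =>
          (Finset.mem_compl.mp (hcsub hac)) (ht ha)
      have hds : Disjoint s.1 c := hdisj s.1 Finset.subset_union_left
      have hdu : Disjoint u.1 c := hdisj u.1 Finset.subset_union_right
      have hsc : s ≠ cv := by
        intro h
        have : s.1 = c := congrArg Subtype.val h
        rw [this] at hds
        have : c = ⊥ := disjoint_self.mp hds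
        rw [this] at hcard
        simp at hcard; omega
      have huc : u ≠ cv := by
        intro h
        have : u.1 = c := congrArg Subtype.val h
        rw [this] at hdu
        have : c = ⊥ := disjoint_self.mp hdu
        rw [this] at hcard
        simp at hcard; omega
      have ha1 : (Kneser k n).Adj s cv := ⟨hsc, Or.inl hds⟩
      have ha2 : (Kneser k n).Adj cv u := ⟨fun h => huc h.symm, Or.inr hdu⟩
      have hwalk : (Kneser k n).dist s u ≤ 2 :=
        SimpleGraph.dist_le ((ha1.toWalk.append ha2.toWalk))
      have hnadj : ¬ (Kneser k n).Adj s u := by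
        rintro ⟨-, h | h⟩
        · exact hd h
        · exact hd h.symm
      have h1 : (Kneser k n).dist s u ≠ 1 := fun h =>
        hnadj (SimpleGraph.dist_eq_one_iff_adj.mp h)
      have h0 : (Kneser k n).dist s u ≠ 0 := by
        intro h
        have hr : (Kneser k n).Reachable s u := ⟨ha1.toWalk.append ha2.toWalk⟩
        exact heq (hr.dist_eq_zero_iff.mp h)
      omega

theorem stmt_2 (k n g : ℕ) (hk : 1 ≤ k) (hn : 3 * k ≤ n)
    (S : Finset {s : Finset (Fin n) // s.card = k})
    (hres : IsResolvingSet (Kneser k n) ↑S) (hcard : S.card = g) :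
    ∃ E : Finset (Finset (Fin n)),
      (∀ h ∈ E, h.card = k) ∧ Detectable k k E ∧ E.card = g := by
  refine ⟨S.image Subtype.val, ?_, ?_, ?_⟩
  · intro h hh
    obtain ⟨s, _, rfl⟩ := Finset.mem_image.mp hh
    exact s.2
  · intro B₁ B₂ h1 h2 hdet
    have := hres ⟨B₁, h1⟩ ⟨B₂, h2⟩ (fun s hs => by
      rw [dist_eq_f k n hk hn s ⟨B₁, h1⟩, dist_eq_f k n hk hn s ⟨B₂, h2⟩]
      have : detVal k s.1 B₁ = detVal k s.1 B₂ :=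
        hdet s.1 (Finset.mem_image.mpr ⟨s, hs, rfl⟩)
      rw [this])
    exact congrArg Subtype.val this
  · rw [Finset.card_image_of_injective _ Subtype.val_injective, hcard]
end

section
/- Let k ≥ 3 with k ≠ 4, n ≥ 3k (and n ≥ 18 if k=3). Every k-detectable hypergraph on n vertices with all hyperedges of cardinality at most k and no repeated hyperedges has at least n/2 + n/k hyperedges. -/
/-!
Give every vertex the weight `σ v = ∑_{h ∋ v} 1 / |h|`, so that `∑ σ = |E|`; it suffices that
the weights average at least `t = 1/2 + 1/k`.

For `u ≠ v`, the sets `S ∪ {u}` and `S ∪ {v}` (with `|S| = k - 1`) are told apart only by an edge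
containing exactly one of `u`, `v` whose link `h \ {u, v}` misses `S` or equals `S`. Padding a
small set that meets all these links with fresh vertices (there is room as `n ≥ 3k`) shows that
there are at least `k` of them. Consequently two vertices of weight below `t` share no edge and
have joint degree at least `k`, and a vertex below `t` and any of its neighbours have joint weight
at least `2t`. When two such vertices have joint degree exactly `k` and a common neighbour, the
`k` links are pinned down completely, which forces `k = 3`.

Now let every vertex below `t` spread its deficit evenly over its neighbours; the facts above show
that every other vertex stays at or above `t`. An isolated vertex is the only exception, and then
every other vertex has weight at least `1`.
-/

open Finset

theorem sum_div_le_card_mul_div {ι : Type*} {R : Finset ι} {δ n : ι → ℚ} {a m : ℚ} (hm : 0 < m)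
    (hδ : ∀ u ∈ R, 0 ≤ δ u ∧ δ u ≤ a) (hn : ∀ u ∈ R, m ≤ n u) :
    ∑ u ∈ R, δ u / n u ≤ #R * a / m := by
  rw [mul_div_assoc, ← nsmul_eq_mul, ← sum_const]
  exact sum_le_sum fun u hu =>
    div_le_div₀ ((hδ u hu).1.trans (hδ u hu).2) (hδ u hu).2 hm (hn u hu)

/-- Discharging: each `u` below `t` spreads its deficit `t - s u` evenly over `N u`. -/
theorem card_mul_le_sum_of_discharging {ι : Type*} [Fintype ι] [DecidableEq ι] (s : ι → ℚ)
    (t : ℚ) (N : ι → Finset ι) (hN : ∀ u, s u < t → (N u).Nonempty ∧ ∀ w ∈ N u, t ≤ s w)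
    (hw : ∀ w, t ≤ s w → t + ∑ u with s u < t ∧ w ∈ N u, (t - s u) / #(N u) ≤ s w) :
    Fintype.card ι * t ≤ ∑ i, s i := by
  have htransfer : ∑ w with t ≤ s w, ∑ u with s u < t ∧ w ∈ N u, (t - s u) / #(N u) =
      ∑ u with s u < t, (t - s u) := by
    rw [sum_comm' (t' := {u | s u < t}) (s' := N)]
    · refine sum_congr rfl fun u hu => ?_
      have := (hN u (mem_filter.1 hu).2).1.card_pos
      rw [sum_const, nsmul_eq_mul]
      field_simp
    · intro w u
      simp only [mem_filter, mem_univ, true_and]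
      exact ⟨fun ⟨_, hu, hw⟩ => ⟨hw, hu⟩, fun ⟨hw, hu⟩ => ⟨(hN u hu).2 w hw, hu, hw⟩⟩
  have hA := sum_le_sum fun w (hw' : w ∈ ({w | t ≤ s w} : Finset ι)) => hw w (mem_filter.1 hw').2
  rw [sum_add_distrib, sum_const, nsmul_eq_mul, htransfer] at hA
  have hD : ∑ u with s u < t, (t - s u) = #{u | s u < t} * t - ∑ u with s u < t, s u := by
    rw [sum_sub_distrib, sum_const, nsmul_eq_mul]
  have hsplit := sum_filter_add_sum_filter_not univ (fun u => s u < t) s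
  have hcard := card_filter_add_card_filter_not (s := (univ : Finset ι)) (fun u => s u < t)
  simp only [not_lt, card_univ] at hsplit hcard
  have : (Fintype.card ι : ℚ) = #{u | s u < t} + #{u | t ≤ s u} := by exact_mod_cast hcard.symm
  rw [this]
  linarith

namespace Hypergraph

variable {V : Type*} {k : ℕ}

theorem card_div_le_sum_inv_card {s : Finset (Finset V)} (hne : ∀ h ∈ s, h.Nonempty)
    (hle : ∀ h ∈ s, #h ≤ k) : (#s : ℚ) / k ≤ ∑ h ∈ s, (1 : ℚ) / #h := by
  rw [div_eq_mul_one_div, ← nsmul_eq_mul, ← sum_const]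
  gcongr with h hh
  exact_mod_cast hle h hh

def Hits (C : Finset (Finset V)) (T : Finset V) : Prop :=
  ∀ c ∈ C, ¬Disjoint c T

theorem Hits.mono {C : Finset (Finset V)} {T T' : Finset V} (h : Hits C T) (hT : T ⊆ T') :
    Hits C T' :=
  fun c hc hd => h c hc (hd.mono_right hT)

variable [DecidableEq V] {E : Finset (Finset V)}

def weight (E : Finset (Finset V)) (v : V) : ℚ :=
  ∑ h ∈ E with v ∈ h, (1 : ℚ) / #h

def threshold (k : ℕ) : ℚ := 1 / 2 + 1 / k

theorem sum_weight [Fintype V] (hne : ∀ h ∈ E, h.Nonempty) : ∑ v, weight E v = #E := by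
  simp only [weight, sum_filter]
  rw [sum_comm, card_eq_sum_ones, Nat.cast_sum]
  refine sum_congr rfl fun h hh => ?_
  rw [← sum_filter, filter_mem_eq_inter, univ_inter, sum_const, nsmul_eq_mul, Nat.cast_one]
  have := (hne h hh).card_pos
  field_simp

theorem hdeg_div_le_weight (hne : ∀ h ∈ E, h.Nonempty) (hle : ∀ h ∈ E, #h ≤ k) (v : V) :
    (hdeg E v : ℚ) / k ≤ weight E v :=
  card_div_le_sum_inv_card (fun h hh => hne h (mem_filter.1 hh).1)
    fun h hh => hle h (mem_filter.1 hh).1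

theorem inv_card_le_weight {v : V} {e : Finset V} (he : e ∈ E) (hv : v ∈ e) :
    1 / (#e : ℚ) ≤ weight E v :=
  single_le_sum (f := fun h : Finset V => (1 : ℚ) / #h) (fun _ _ => by positivity)
    (mem_filter.2 ⟨he, hv⟩)

theorem inv_card_add_le_weight (hne : ∀ h ∈ E, h.Nonempty) (hle : ∀ h ∈ E, #h ≤ k) {v : V}
    {e : Finset V} (he : e ∈ E) (hv : v ∈ e) :
    1 / (#e : ℚ) + ((hdeg E v : ℚ) - 1) / k ≤ weight E v := by
  have hmem : e ∈ {h ∈ E | v ∈ h} := mem_filter.2 ⟨he, hv⟩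
  have hrest := card_div_le_sum_inv_card (k := k) (s := {h ∈ E | v ∈ h}.erase e)
    (fun h hh => hne h (mem_filter.1 (mem_of_mem_erase hh)).1)
    (fun h hh => hle h (mem_filter.1 (mem_of_mem_erase hh)).1)
  rw [card_erase_of_mem hmem, Nat.cast_sub (card_pos.2 ⟨e, hmem⟩), Nat.cast_one] at hrest
  rw [weight, hdeg, ← add_sum_erase _ _ hmem]
  linarith

theorem inv_card_add_inv_card_le_weight {v : V} {e e' : Finset V} (he : e ∈ E) (he' : e' ∈ E)
    (hee' : e ≠ e') (hv : v ∈ e) (hv' : v ∈ e') : 1 / (#e : ℚ) + 1 / #e' ≤ weight E v := by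
  rw [← sum_pair (f := fun h : Finset V => (1 : ℚ) / #h) hee']
  refine sum_le_sum_of_subset_of_nonneg ?_ fun _ _ _ => by positivity
  intro h hh
  rcases mem_insert.1 hh with rfl | hh
  · exact mem_filter.2 ⟨he, hv⟩
  · rw [mem_singleton.1 hh]; exact mem_filter.2 ⟨he', hv'⟩

theorem threshold_lt_one (hk : 3 ≤ k) : threshold k < 1 := by
  have : (3 : ℚ) ≤ k := by exact_mod_cast hk
  rw [threshold, ← lt_sub_iff_add_lt', div_lt_iff₀ (by linarith)]
  linarith

theorem singleton_notMem_of_weight_lt (hk : 3 ≤ k) {u : V} (hu : weight E u < threshold k) :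
    {u} ∉ E := fun hmem => by
  have := inv_card_le_weight hmem (mem_singleton_self u)
  rw [card_singleton, Nat.cast_one, div_one] at this
  linarith [threshold_lt_one hk]

theorem threshold_le_weight_of_card_le_two (hle : ∀ h ∈ E, #h ≤ k) {v : V} {e e' : Finset V}
    (he : e ∈ E) (he' : e' ∈ E) (hee' : e ≠ e') (hv : v ∈ e) (hv' : v ∈ e') (he2 : #e ≤ 2) :
    threshold k ≤ weight E v := by
  have h1 : (1 : ℚ) / 2 ≤ 1 / #e := one_div_le_one_div_of_le
    (by exact_mod_cast card_pos.2 ⟨v, hv⟩) (by exact_mod_cast he2)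
  have h2 : (1 : ℚ) / k ≤ 1 / #e' := one_div_le_one_div_of_le
    (by exact_mod_cast card_pos.2 ⟨v, hv'⟩) (by exact_mod_cast hle e' he')
  rw [threshold]
  linarith [inv_card_add_inv_card_le_weight he he' hee' hv hv']

theorem two_mul_hdeg_lt (hne : ∀ h ∈ E, h.Nonempty) (hle : ∀ h ∈ E, #h ≤ k) (hk : 0 < k)
    {u : V} (hu : weight E u < threshold k) : 2 * hdeg E u < k + 2 := by
  have hk' : (0 : ℚ) < k := by exact_mod_cast hk
  have h := (hdeg_div_le_weight hne hle u).trans_lt hu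
  rw [threshold, div_lt_iff₀ hk', add_mul, one_div_mul_cancel hk'.ne'] at h
  exact_mod_cast (show (2 * hdeg E u : ℚ) < k + 2 by linarith)

theorem threshold_sub_weight_le_of_two_mul_hdeg_eq (hne : ∀ h ∈ E, h.Nonempty)
    (hle : ∀ h ∈ E, #h ≤ k) (hk : 0 < k) {u : V} (hdu : 2 * hdeg E u = k + 1) :
    threshold k - weight E u ≤ 1 / (2 * k) := by
  have hk' : (0 : ℚ) < k := by exact_mod_cast hk
  have hd : (hdeg E u : ℚ) = (k + 1) / 2 := by
    have : (2 * hdeg E u : ℚ) = k + 1 := by exact_mod_cast hdu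
    linarith
  have h : (hdeg E u : ℚ) / k = threshold k - 1 / (2 * k) := by
    rw [hd, threshold]; field_simp; ring
  linarith [hdeg_div_le_weight hne hle u]

theorem weight_nonneg (E : Finset (Finset V)) (v : V) : 0 ≤ weight E v :=
  sum_nonneg fun _ _ => by positivity

theorem weight_eq_of_forall_card_eq {m : ℕ} {u : V} (h : ∀ e ∈ E, u ∈ e → #e = m) :
    weight E u = hdeg E u / m := by
  rw [weight, sum_congr rfl fun e he => by rw [h e (mem_filter.1 he).1 (mem_filter.1 he).2],
    sum_const, nsmul_eq_mul, hdeg]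
  ring

def neighbors (E : Finset (Finset V)) (u : V) : Finset V :=
  ({h ∈ E | u ∈ h}.sup id).erase u

theorem mem_neighbors {u w : V} : w ∈ neighbors E u ↔ w ≠ u ∧ ∃ h ∈ E, u ∈ h ∧ w ∈ h := by
  simp [neighbors, mem_sup, and_assoc]

def lightNeighbors [Fintype V] (E : Finset (Finset V)) (k : ℕ) (w : V) : Finset V :=
  {u | weight E u < threshold k ∧ w ∈ neighbors E u}

theorem mem_lightNeighbors [Fintype V] {u w : V} :
    u ∈ lightNeighbors E k w ↔ weight E u < threshold k ∧ w ∈ neighbors E u := by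
  simp [lightNeighbors]

theorem erase_subset_neighbors {u : V} {e : Finset V} (he : e ∈ E) (hu : u ∈ e) :
    e.erase u ⊆ neighbors E u :=
  fun _ hx => mem_neighbors.2 ⟨ne_of_mem_erase hx, e, he, hu, mem_of_mem_erase hx⟩

theorem card_le_card_neighbors {u : V} {e e' : Finset V} (he : e ∈ E) (he' : e' ∈ E)
    (hee' : e ≠ e') (hu : u ∈ e) (hu' : u ∈ e') (hcard : #e ≤ #e') : #e ≤ #(neighbors E u) := by
  have h' := card_le_card (erase_subset_neighbors he' hu')
  rw [card_erase_of_mem hu'] at h'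
  by_cases hsub : e ⊆ e'
  · have := card_lt_card (Finset.ssubset_iff_subset_ne.2 ⟨hsub, hee'⟩)
    omega
  · obtain ⟨x, hxe, hxe'⟩ := not_subset.1 hsub
    have hx : x ∉ e'.erase u := fun h => hxe' (mem_of_mem_erase h)
    have hxN : x ∈ neighbors E u :=
      mem_neighbors.2 ⟨fun (h : x = u) => hxe' (h ▸ hu'), e, he, hu, hxe⟩
    have := card_le_card (insert_subset hxN (erase_subset_neighbors he' hu'))
    rw [card_insert_of_notMem hx, card_erase_of_mem hu'] at this
    have := card_pos.2 ⟨u, hu'⟩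
    omega

theorem hdeg_add_one_le_card_neighbors {u : V} (htriple : ∀ e ∈ E, u ∈ e → #e = 3)
    (h0 : 0 < hdeg E u) (h2 : hdeg E u ≤ 2) : hdeg E u + 1 ≤ #(neighbors E u) := by
  obtain ⟨e, he⟩ := card_pos.1 h0
  rw [mem_filter] at he
  have h1 := card_le_card (erase_subset_neighbors he.1 he.2)
  rw [card_erase_of_mem he.2, htriple e he.1 he.2] at h1
  by_cases hd : hdeg E u = 1
  · omega
  obtain ⟨e₁, he₁, e₂, he₂, h₁₂⟩ := one_lt_card.1 (show 1 < #{h ∈ E | u ∈ h} by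
    change 1 < hdeg E u; omega)
  rw [mem_filter] at he₁ he₂
  have := card_le_card_neighbors he₁.1 he₂.1 h₁₂ he₁.2 he₂.2
    (by rw [htriple _ he₁.1 he₁.2, htriple _ he₂.1 he₂.2])
  rw [htriple _ he₁.1 he₁.2] at this
  omega

theorem add_three_le_two_mul_card_neighbors (hne : ∀ h ∈ E, h.Nonempty) (hle : ∀ h ∈ E, #h ≤ k)
    (hk : 4 ≤ k) {u : V} (hu : weight E u < threshold k) (hdu : 2 * hdeg E u = k + 1) :
    k + 3 ≤ 2 * #(neighbors E u) := by
  have hk' : (0 : ℚ) < k := by exact_mod_cast (show 0 < k by omega)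
  have hlarge : ∀ e ∈ E, u ∈ e → 2 * k < 3 * #e := by
    intro e he hue
    have h1 := inv_card_add_le_weight hne hle he hue
    have hd : (hdeg E u : ℚ) = (k + 1) / 2 := by
      have : (2 * hdeg E u : ℚ) = k + 1 := by exact_mod_cast hdu
      linarith
    have he0 : (0 : ℚ) < #e := by exact_mod_cast card_pos.2 ⟨u, hue⟩
    have hsplit : ((k + 1) / 2 - 1) / (k : ℚ) = 1 / 2 - 3 / (2 * k) + 1 / k := by
      field_simp; ring
    rw [hd, hsplit] at h1
    rw [threshold] at hu
    have h2 : 1 / (#e : ℚ) < 3 / (2 * k) := by linarith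
    rw [div_lt_div_iff₀ he0 (by positivity)] at h2
    exact_mod_cast (show (2 * k : ℚ) < 3 * #e by linarith)
  obtain ⟨e, he, e', he', hee'⟩ := one_lt_card.1 (show 1 < #{h ∈ E | u ∈ h} by
    change 1 < hdeg E u; omega)
  rw [mem_filter] at he he'
  rcases le_total #e #e' with h | h
  · have := card_le_card_neighbors he.1 he'.1 hee' he.2 he'.2 h
    have := hlarge e he.1 he.2
    omega
  · have := card_le_card_neighbors he'.1 he.1 hee'.symm he'.2 he.2 h
    have := hlarge e' he'.1 he'.2
    omega

variable {u v : V}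

def separatingLinks (E : Finset (Finset V)) (u v : V) : Finset (Finset V) :=
  {h ∈ E | u ∈ h ∧ v ∉ h}.image (·.erase u) ∪ {h ∈ E | v ∈ h ∧ u ∉ h}.image (·.erase v)

theorem mem_separatingLinks {c : Finset V} :
    c ∈ separatingLinks E u v ↔
      (∃ h ∈ E, u ∈ h ∧ v ∉ h ∧ h.erase u = c) ∨ ∃ h ∈ E, v ∈ h ∧ u ∉ h ∧ h.erase v = c := by
  simp [separatingLinks, and_assoc]

theorem notMem_of_mem_separatingLinks {c : Finset V} (hc : c ∈ separatingLinks E u v) :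
    u ∉ c ∧ v ∉ c := by
  rcases mem_separatingLinks.1 hc with ⟨h, -, -, hv, rfl⟩ | ⟨h, -, -, hu, rfl⟩
  · exact ⟨notMem_erase u h, fun h' => hv (mem_of_mem_erase h')⟩
  · exact ⟨fun h' => hu (mem_of_mem_erase h'), notMem_erase v h⟩

theorem nonempty_of_mem_separatingLinks (hu : {u} ∉ E) (hv : {v} ∉ E) {c : Finset V}
    (hc : c ∈ separatingLinks E u v) : c.Nonempty := by
  rw [nonempty_iff_ne_empty]
  rcases mem_separatingLinks.1 hc with ⟨h, hh, hu', -, rfl⟩ | ⟨h, hh, hv', -, rfl⟩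
  · rw [Ne, erase_eq_empty_iff]
    rintro (rfl | rfl)
    exacts [notMem_empty u hu', hu hh]
  · rw [Ne, erase_eq_empty_iff]
    rintro (rfl | rfl)
    exacts [notMem_empty v hv', hv hh]

theorem hdeg_eq_card_add_card (E : Finset (Finset V)) (u v : V) :
    hdeg E u = #{h ∈ E | u ∈ h ∧ v ∉ h} + #{h ∈ E | u ∈ h ∧ v ∈ h} := by
  rw [hdeg, ← card_filter_add_card_filter_not (p := fun h => v ∉ h), filter_filter, filter_filter]
  simp only [not_not]

theorem card_separatingLinks_add_le (E : Finset (Finset V)) (u v : V) :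
    #(separatingLinks E u v) + 2 * #{h ∈ E | u ∈ h ∧ v ∈ h} ≤ hdeg E u + hdeg E v := by
  have hC : #(separatingLinks E u v) ≤ #{h ∈ E | u ∈ h ∧ v ∉ h} + #{h ∈ E | v ∈ h ∧ u ∉ h} :=
    (card_union_le _ _).trans (add_le_add card_image_le card_image_le)
  have hcomm : {h ∈ E | v ∈ h ∧ u ∈ h} = {h ∈ E | u ∈ h ∧ v ∈ h} :=
    filter_congr fun _ _ => and_comm
  have hu := hdeg_eq_card_add_card E u v
  have hv := hdeg_eq_card_add_card E v u
  rw [hcomm] at hv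
  omega

theorem card_separatingLinks_lt {e₁ e₂ : Finset V} (he₁ : e₁ ∈ E) (he₂ : e₂ ∈ E) (hu₁ : u ∈ e₁)
    (hv₁ : v ∉ e₁) (hv₂ : v ∈ e₂) (hu₂ : u ∉ e₂) (heq : e₁.erase u = e₂.erase v) :
    #(separatingLinks E u v) < hdeg E u + hdeg E v := by
  have hinter : 0 < #({h ∈ E | u ∈ h ∧ v ∉ h}.image (·.erase u) ∩
      {h ∈ E | v ∈ h ∧ u ∉ h}.image (·.erase v)) :=
    card_pos.2 ⟨e₁.erase u, mem_inter.2 ⟨mem_image_of_mem _ (mem_filter.2 ⟨he₁, hu₁, hv₁⟩),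
      heq ▸ mem_image_of_mem _ (mem_filter.2 ⟨he₂, hv₂, hu₂⟩)⟩⟩
  have := card_union_add_card_inter ({h ∈ E | u ∈ h ∧ v ∉ h}.image (·.erase u))
    ({h ∈ E | v ∈ h ∧ u ∉ h}.image (·.erase v))
  have h1 : #({h ∈ E | u ∈ h ∧ v ∉ h}.image (·.erase u)) ≤ #{h ∈ E | u ∈ h ∧ v ∉ h} :=
    card_image_le
  have h2 : #({h ∈ E | v ∈ h ∧ u ∉ h}.image (·.erase v)) ≤ #{h ∈ E | v ∈ h ∧ u ∉ h} :=
    card_image_le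
  have hu := hdeg_eq_card_add_card E u v
  have hv := hdeg_eq_card_add_card E v u
  rw [separatingLinks]
  omega

theorem exists_hits_card_le (D : Finset (Finset V)) (hD : ∀ c ∈ D, c.Nonempty) :
    ∃ Y ⊆ D.sup id, #Y ≤ #D ∧ Hits D Y := by
  induction D using Finset.induction_on with
  | empty => exact ⟨∅, empty_subset _, le_rfl, fun c hc => absurd hc (notMem_empty c)⟩
  | insert c D hcD ih =>
    obtain ⟨Y, hYD, hYcard, hY⟩ := ih fun d hd => hD d (mem_insert_of_mem hd)
    obtain ⟨x, hx⟩ := hD c (mem_insert_self c D)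
    refine ⟨insert x Y, ?_, ?_, ?_⟩
    · rw [sup_insert]
      exact insert_subset (mem_union_left _ hx) (hYD.trans subset_union_right)
    · rw [card_insert_of_notMem hcD]
      exact (card_insert_le x Y).trans (by omega)
    · intro d hd hdisj
      rcases mem_insert.1 hd with rfl | hd
      · exact disjoint_left.1 hdisj hx (mem_insert_self x Y)
      · exact hY d hd (hdisj.mono_right (subset_insert x Y))

def IsMeetBounded (C : Finset (Finset V)) : Prop :=
  ∀ D ⊆ C, ∀ X ⊆ C.sup id, (∀ c ∈ D, ¬Disjoint c X) → #D ≤ #X + 1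

section IsMeetBounded

variable {C : Finset (Finset V)} {c₁ c₂ : Finset V}

theorem IsMeetBounded.notMem (hC : IsMeetBounded C) (hc₁ : c₁ ∈ C) (hc₂ : c₂ ∈ C)
    (hc₁₂ : c₁ ≠ c₂) {g : Finset V} (hg : g ∈ C) (hg₁ : g ≠ c₁) (hg₂ : g ≠ c₂) {x : V}
    (hx₁ : x ∈ c₁) (hx₂ : x ∈ c₂) : x ∉ g := fun hxg => by
  have := hC {c₁, c₂, g} (by simp [insert_subset_iff, hc₁, hc₂, hg]) {x}
    (singleton_subset_iff.2 (mem_sup.2 ⟨c₁, hc₁, hx₁⟩)) (by simp [hx₁, hx₂, hxg])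
  rw [card_eq_three.2 ⟨c₁, c₂, g, hc₁₂, hg₁.symm, hg₂.symm, rfl⟩, card_singleton] at this
  omega

theorem IsMeetBounded.disjoint (hC : IsMeetBounded C) (hc₁ : c₁ ∈ C) (hc₂ : c₂ ∈ C)
    (hc₁₂ : c₁ ≠ c₂) {w : V} (hw₁ : w ∈ c₁) (hw₂ : w ∈ c₂) {g g' : Finset V} (hg : g ∈ C)
    (hg' : g' ∈ C) (hg₁ : g ≠ c₁) (hg₂ : g ≠ c₂) (hg'₁ : g' ≠ c₁) (hg'₂ : g' ≠ c₂)
    (hgg' : g ≠ g') : Disjoint g g' := by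
  rw [disjoint_left]
  intro x hxg hxg'
  have := hC {c₁, c₂, g, g'} (by simp [insert_subset_iff, hc₁, hc₂, hg, hg']) {w, x}
    (insert_subset (mem_sup.2 ⟨c₁, hc₁, hw₁⟩) (singleton_subset_iff.2 (mem_sup.2 ⟨g, hg, hxg⟩)))
    (by simp [hw₁, hw₂, hxg, hxg'])
  rw [card_insert_of_notMem (by simp [hc₁₂, hg₁.symm, hg'₁.symm]),
    card_eq_three.2 ⟨c₂, g, g', hg₂.symm, hg'₂.symm, hgg', rfl⟩] at this
  have := card_le_two (a := w) (b := x)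
  omega

/-- By `hhit` the set is a member; as it contains `w`, it is `c₁` or `c₂`. -/
theorem IsMeetBounded.insert_insert_eq (hC : IsMeetBounded C)
    (hhit : ∀ T ⊆ C.sup id, Hits C T → #T + 1 ≤ k → T ∈ C ∧ #T + 1 = k) (hc₁ : c₁ ∈ C)
    (hc₂ : c₂ ∈ C) (hc₁₂ : c₁ ≠ c₂) {w : V} (hw₁ : w ∈ c₁) (hw₂ : w ∈ c₂) {g₀ Y : Finset V}
    (hg₀ : g₀ ∈ C) {z : V} (hz : z ∈ g₀) (hYC : Y ⊆ C.sup id) (hYk : #Y + 3 ≤ k)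
    (hY : ∀ c ∈ C, c ≠ c₁ → c ≠ c₂ → c ≠ g₀ → ¬Disjoint c Y) :
    (insert w (insert z Y) = c₁ ∨ insert w (insert z Y) = c₂) ∧
      #(insert w (insert z Y)) + 1 = k := by
  have hhits : Hits C (insert w (insert z Y)) := by
    intro c hc hdisj
    by_cases h₁ : c = c₁
    · exact disjoint_left.1 hdisj (h₁ ▸ hw₁) (mem_insert_self _ _)
    by_cases h₂ : c = c₂
    · exact disjoint_left.1 hdisj (h₂ ▸ hw₂) (mem_insert_self _ _)
    by_cases h₀ : c = g₀
    · exact disjoint_left.1 hdisj (h₀ ▸ hz) (mem_insert_of_mem (mem_insert_self _ _))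
    exact hY c hc h₁ h₂ h₀ (hdisj.mono_right ((subset_insert _ _).trans (subset_insert _ _)))
  have hTC : insert w (insert z Y) ⊆ C.sup id :=
    insert_subset (mem_sup.2 ⟨c₁, hc₁, hw₁⟩) (insert_subset (mem_sup.2 ⟨g₀, hg₀, hz⟩) hYC)
  have h1 := card_insert_le w (insert z Y)
  have h2 := card_insert_le z Y
  obtain ⟨hmem, hTk⟩ := hhit _ hTC hhits (by omega)
  refine ⟨?_, hTk⟩
  by_contra! hne
  exact hC.notMem hc₁ hc₂ hc₁₂ hmem hne.1 hne.2 hw₁ hw₂ (mem_insert_self _ _)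

/-- For `y ≠ y'` in a third member `g₀` and a transversal `Y` of the remaining members, the sets
`{w, y} ∪ Y` and `{w, y'} ∪ Y` are `c₁` and `c₂`; so `Y ⊆ c₁ ∩ c₂`, leaving no fourth member. -/
theorem IsMeetBounded.eq_three (hC : IsMeetBounded C)
    (hhit : ∀ T ⊆ C.sup id, Hits C T → #T + 1 ≤ k → T ∈ C ∧ #T + 1 = k) (hCk : #C = k)
    (hk : 3 ≤ k) (hne : ∀ c ∈ C, c.Nonempty) (hc₁ : c₁ ∈ C) (hc₂ : c₂ ∈ C) (hc₁₂ : c₁ ≠ c₂)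
    {w : V} (hw₁ : w ∈ c₁) (hw₂ : w ∈ c₂) (htwo : ∀ g ∈ C, g ≠ c₁ → g ≠ c₂ → 2 ≤ #g) :
    k = 3 ∧ #c₁ = 2 ∧ #c₂ = 2 := by
  set G := (C.erase c₁).erase c₂
  have hmemG : ∀ {g}, g ∈ G ↔ g ∈ C ∧ g ≠ c₁ ∧ g ≠ c₂ := by
    intro g; simp only [G, mem_erase]; tauto
  have hGcard : #G + 2 = k := by
    rw [card_erase_of_mem (mem_erase.2 ⟨hc₁₂.symm, hc₂⟩), card_erase_of_mem hc₁]; omega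
  obtain ⟨g₀, hg₀⟩ : G.Nonempty := card_pos.1 (by omega)
  obtain ⟨hg₀C, hg₀₁, hg₀₂⟩ := hmemG.1 hg₀
  obtain ⟨y, hy, y', hy', hyy'⟩ := one_lt_card.1 (htwo g₀ hg₀C hg₀₁ hg₀₂)
  obtain ⟨Y, hYG, hYcard, hY⟩ :=
    exists_hits_card_le (G.erase g₀) fun g hg => hne g (hmemG.1 (mem_of_mem_erase hg)).1
  rw [card_erase_of_mem hg₀] at hYcard
  have hYG' : ∀ c ∈ C, c ≠ c₁ → c ≠ c₂ → c ≠ g₀ → ¬Disjoint c Y :=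
    fun c hc h₁ h₂ h₀ => hY c (mem_erase.2 ⟨h₀, hmemG.2 ⟨hc, h₁, h₂⟩⟩)
  have hYC : Y ⊆ C.sup id := hYG.trans (sup_mono fun g hg => (hmemG.1 (mem_of_mem_erase hg)).1)
  obtain ⟨hTy, hky⟩ := hC.insert_insert_eq hhit hc₁ hc₂ hc₁₂ hw₁ hw₂ hg₀C hy hYC (by omega) hYG'
  obtain ⟨hTy', hky'⟩ :=
    hC.insert_insert_eq hhit hc₁ hc₂ hc₁₂ hw₁ hw₂ hg₀C hy' hYC (by omega) hYG'
  have hTne : insert w (insert y Y) ≠ insert w (insert y' Y) := fun h => by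
    have : y' ∈ insert w (insert y Y) := h ▸ mem_insert_of_mem (mem_insert_self _ _)
    simp only [mem_insert] at this
    rcases this with h' | h' | h'
    · exact hC.notMem hc₁ hc₂ hc₁₂ hg₀C hg₀₁ hg₀₂ hw₁ hw₂ (h' ▸ hy')
    · exact hyy' h'.symm
    · obtain ⟨g, hg, hy'g⟩ := mem_sup.1 (hYG h')
      obtain ⟨hgC, hg₁, hg₂⟩ := hmemG.1 (mem_of_mem_erase hg)
      exact disjoint_left.1 (hC.disjoint hc₁ hc₂ hc₁₂ hw₁ hw₂ hgC hg₀C hg₁ hg₂ hg₀₁ hg₀₂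
        (ne_of_mem_erase hg)) hy'g hy'
  have hYT : ∀ z, Y ⊆ insert w (insert z Y) :=
    fun z => (subset_insert _ _).trans (subset_insert _ _)
  have hboth : #c₁ + 1 = k ∧ #c₂ + 1 = k ∧ Y ⊆ c₁ ∩ c₂ := by
    rcases hTy with h | h <;> rcases hTy' with h' | h'
    · exact absurd (h.trans h'.symm) hTne
    · rw [← h, ← h']; exact ⟨hky, hky', subset_inter (hYT y) (hYT y')⟩
    · rw [← h, ← h']; exact ⟨hky', hky, subset_inter (hYT y') (hYT y)⟩
    · exact absurd (h.trans h'.symm) hTne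
  have hG : G.erase g₀ = ∅ := by
    refine eq_empty_of_forall_notMem fun g hg => ?_
    obtain ⟨a, hag, haY⟩ := not_disjoint_iff.1 (hY g hg)
    obtain ⟨hgC, hg₁, hg₂⟩ := hmemG.1 (mem_of_mem_erase hg)
    have ha := mem_inter.1 (hboth.2.2 haY)
    exact hC.notMem hc₁ hc₂ hc₁₂ hgC hg₁ hg₂ ha.1 ha.2 hag
  have := card_erase_of_mem hg₀
  rw [hG, card_empty] at this
  omega

end IsMeetBounded

theorem notMem_sup_of_subset_separatingLinks {D : Finset (Finset V)}
    (hD : D ⊆ separatingLinks E u v) : u ∉ D.sup id ∧ v ∉ D.sup id := by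
  constructor <;> intro h <;> obtain ⟨c, hc, hxc⟩ := mem_sup.1 h
  exacts [(notMem_of_mem_separatingLinks (hD hc)).1 hxc,
    (notMem_of_mem_separatingLinks (hD hc)).2 hxc]

theorem detVal_insert_eq_of_mem_of_notMem {h S : Finset V} (hh : #h ≤ k) (hS : #S + 1 = k)
    (huS : u ∉ S) (hu : u ∈ h) (hv : v ∉ h) (hhit : ¬Disjoint (h.erase u) S)
    (hne : h.erase u ≠ S) : detVal k h (insert u S) = detVal k h (insert v S) := by
  have hc : h.erase u ∩ S = h ∩ S := by
    rw [erase_inter, erase_eq_of_notMem fun h' => huS (mem_inter.1 h').2]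
  rw [not_disjoint_iff_nonempty_inter, hc] at hhit
  have hlt : #(h ∩ S) + 1 < k := by
    by_contra hge
    have hSh : h ∩ S = S := eq_of_subset_of_card_le inter_subset_right (by omega)
    refine hne (eq_of_subset_of_card_le ?_ ?_).symm
    · rw [← hSh, ← hc]; exact inter_subset_left
    · rw [card_erase_of_mem hu]; omega
  have h1 : #(h ∩ insert u S) = #(h ∩ S) + 1 := by
    rw [inter_insert_of_mem hu, card_insert_of_notMem fun h' => huS (mem_inter.1 h').2]
  have h0 := hhit.card_pos
  simp only [detVal, h1, inter_insert_of_notMem hv]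
  rw [if_neg (by omega), if_neg (by omega), if_neg (by omega), if_neg (by omega)]

end Hypergraph

open Hypergraph

namespace Detectable

variable {V : Type*} [DecidableEq V] {k : ℕ} {E : Finset (Finset V)} {u v : V}

/-- Otherwise `S ∪ {u}` and `S ∪ {v}` would have the same detection vector. -/
theorem mem_separatingLinks_of_hits (hdet : Detectable k k E) (hle : ∀ h ∈ E, #h ≤ k)
    (huv : u ≠ v) {S : Finset V} (hS : #S + 1 = k) (huS : u ∉ S) (hvS : v ∉ S)
    (hhit : Hits (separatingLinks E u v) S) : S ∈ separatingLinks E u v := by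
  by_contra hSC
  have key : ∀ h ∈ E, detVal k h (insert u S) = detVal k h (insert v S) := by
    intro h hh
    by_cases hu : u ∈ h <;> by_cases hv : v ∈ h
    · simp only [detVal, inter_insert_of_mem hu, inter_insert_of_mem hv,
        card_insert_of_notMem fun h' => huS (mem_inter.1 h').2,
        card_insert_of_notMem fun h' => hvS (mem_inter.1 h').2]
    · have hc : h.erase u ∈ separatingLinks E u v :=
        mem_separatingLinks.2 (.inl ⟨h, hh, hu, hv, rfl⟩)
      exact detVal_insert_eq_of_mem_of_notMem (hle h hh) hS huS hu hv (hhit _ hc)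
        fun h' => hSC (h' ▸ hc)
    · have hc : h.erase v ∈ separatingLinks E u v :=
        mem_separatingLinks.2 (.inr ⟨h, hh, hv, hu, rfl⟩)
      exact (detVal_insert_eq_of_mem_of_notMem (hle h hh) hS hvS hv hu (hhit _ hc)
        fun h' => hSC (h' ▸ hc)).symm
    · simp only [detVal, inter_insert_of_notMem hu, inter_insert_of_notMem hv]
  have hcard : ∀ x ∉ S, #(insert x S) = k := fun x hx => by rw [card_insert_of_notMem hx, hS]
  have := hdet _ _ (hcard u huS) (hcard v hvS) key
  exact huv ((mem_insert.1 (this ▸ mem_insert_self u S)).resolve_right huS)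

/-- Pad `T` with fresh vertices to a `(k - 1)`-set that is not a link; there is room since
`n ≥ 3k`. -/
theorem le_card_add_one_of_hits [Fintype V] (hdet : Detectable k k E) (hle : ∀ h ∈ E, #h ≤ k)
    (hn : 3 * k ≤ Fintype.card V) (huv : u ≠ v) (hC : #(separatingLinks E u v) + 2 ≤ 2 * k)
    {T : Finset V} (huT : u ∉ T) (hvT : v ∉ T) (hT : Hits (separatingLinks E u v) T) :
    k ≤ #T + 1 := by
  by_contra! hTk
  have huv2 : #({u, v} : Finset V) = 2 := card_pair huv
  have hTuv : T ⊆ {u, v}ᶜ := fun x hx => by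
    simp only [mem_compl, mem_insert, mem_singleton, not_or]
    exact ⟨ne_of_mem_of_not_mem hx huT, ne_of_mem_of_not_mem hx hvT⟩
  obtain ⟨T', hTT', hT'uv, hT'card⟩ := exists_subsuperset_card_eq (n := k - 2) hTuv (by omega)
    (by rw [card_compl]; omega)
  set B := {x ∈ T'ᶜ | insert x T' ∈ separatingLinks E u v}
  have hB : #B ≤ #(separatingLinks E u v) := card_le_card_of_injOn (insert · T')
    (fun x hx => (mem_filter.1 hx).2)
    fun x hx y _ hxy => (insert_inj (mem_compl.1 (mem_filter.1 hx).1)).1 hxy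
  obtain ⟨x, hx⟩ : (T' ∪ {u, v} ∪ B)ᶜ.Nonempty := by
    rw [← card_pos, card_compl]
    have := card_union_le (T' ∪ {u, v}) B
    have := card_union_le T' {u, v}
    omega
  simp only [mem_compl, mem_union, mem_insert, mem_singleton, not_or] at hx
  obtain ⟨⟨hxT', hxu, hxv⟩, hxB⟩ := hx
  have hnot : ∀ y ∈ ({u, v} : Finset V), y ∉ insert x T' := fun y hy hyS => by
    rcases mem_insert.1 hyS with rfl | hyT'
    · simp only [mem_insert, mem_singleton] at hy
      rcases hy with rfl | rfl <;> contradiction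
    · exact mem_compl.1 (hT'uv hyT') hy
  have hS := hdet.mem_separatingLinks_of_hits hle huv (by rw [card_insert_of_notMem hxT']; omega)
    (hnot u (mem_insert_self u {v})) (hnot v (mem_insert_of_mem (mem_singleton_self v)))
    (hT.mono (hTT'.trans (subset_insert x T')))
  exact hxB (mem_filter.2 ⟨mem_compl.2 hxT', hS⟩)

/-- A point of each link disjoint from `X` completes `X` to a set hitting all links. -/
theorem card_add_le_of_not_disjoint [Fintype V] (hdet : Detectable k k E)
    (hle : ∀ h ∈ E, #h ≤ k) (hn : 3 * k ≤ Fintype.card V) (huv : u ≠ v)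
    (hC : #(separatingLinks E u v) + 2 ≤ 2 * k)
    (hne : ∀ c ∈ separatingLinks E u v, c.Nonempty) {D : Finset (Finset V)} {X : Finset V}
    (hDC : D ⊆ separatingLinks E u v) (hDX : ∀ c ∈ D, ¬Disjoint c X) (huX : u ∉ X)
    (hvX : v ∉ X) : #D + k ≤ #X + #(separatingLinks E u v) + 1 := by
  set C := separatingLinks E u v
  obtain ⟨Y, hYsub, hYcard, hY⟩ :=
    exists_hits_card_le {c ∈ C | Disjoint c X} fun c hc => hne c (mem_filter.1 hc).1
  have hYuv := notMem_sup_of_subset_separatingLinks (filter_subset (Disjoint · X) C)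
  have hXY : Hits C (X ∪ Y) := fun c hc hdisj => by
    by_cases hcX : Disjoint c X
    · exact hY c (mem_filter.2 ⟨hc, hcX⟩) (hdisj.mono_right subset_union_right)
    · exact hcX (hdisj.mono_right subset_union_left)
  have h1 := hdet.le_card_add_one_of_hits hle hn huv hC
    (notMem_union.2 ⟨huX, fun h => hYuv.1 (hYsub h)⟩)
    (notMem_union.2 ⟨hvX, fun h => hYuv.2 (hYsub h)⟩) hXY
  have h2 : {c ∈ C | Disjoint c X} ⊆ C \ D := fun c hc =>
    mem_sdiff.2 ⟨(mem_filter.1 hc).1, fun hcD => hDX c hcD (mem_filter.1 hc).2⟩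
  have h3 := card_le_card h2
  rw [card_sdiff_of_subset hDC] at h3
  have h4 := card_union_le X Y
  have h5 := card_le_card hDC
  omega

theorem mem_separatingLinks_of_hits_of_card_le [Fintype V] (hdet : Detectable k k E)
    (hle : ∀ h ∈ E, #h ≤ k) (hn : 3 * k ≤ Fintype.card V) (huv : u ≠ v)
    (hC : #(separatingLinks E u v) + 2 ≤ 2 * k) {T : Finset V} (huT : u ∉ T) (hvT : v ∉ T)
    (hT : Hits (separatingLinks E u v) T) (hTk : #T + 1 ≤ k) :
    T ∈ separatingLinks E u v ∧ #T + 1 = k := by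
  have := hdet.le_card_add_one_of_hits hle hn huv hC huT hvT hT
  exact ⟨hdet.mem_separatingLinks_of_hits hle huv (by omega) huT hvT hT, by omega⟩

theorem le_card_separatingLinks [Fintype V] (hdet : Detectable k k E) (hle : ∀ h ∈ E, #h ≤ k)
    (hk : 3 ≤ k) (hn : 3 * k ≤ Fintype.card V) (huv : u ≠ v) (hu : {u} ∉ E) (hv : {v} ∉ E) :
    k ≤ #(separatingLinks E u v) := by
  by_contra! hCk
  have hne : ∀ c ∈ separatingLinks E u v, c.Nonempty :=
    fun c hc => nonempty_of_mem_separatingLinks hu hv hc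
  have hC : #(separatingLinks E u v) + 2 ≤ 2 * k := by omega
  by_cases hover : ∃ c₁ ∈ separatingLinks E u v, ∃ c₂ ∈ separatingLinks E u v,
      c₁ ≠ c₂ ∧ ¬Disjoint c₁ c₂
  · obtain ⟨c₁, hc₁, c₂, hc₂, hc₁₂, hx⟩ := hover
    obtain ⟨x, hx₁, hx₂⟩ := not_disjoint_iff.1 hx
    have hxuv := notMem_of_mem_separatingLinks hc₁
    have := hdet.card_add_le_of_not_disjoint hle hn huv hC hne (D := {c₁, c₂}) (X := {x})
      (insert_subset hc₁ (singleton_subset_iff.2 hc₂))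
      (by simp only [mem_insert, mem_singleton, disjoint_singleton_right]
          rintro c (rfl | rfl) <;> simpa)
      (notMem_singleton.2 fun h => hxuv.1 (h ▸ hx₁))
      (notMem_singleton.2 fun h => hxuv.2 (h ▸ hx₁))
    rw [card_pair hc₁₂, card_singleton] at this
    omega
  · -- the links are disjoint, and a transversal of them is a link meeting the others
    push Not at hover
    obtain ⟨Y, hYC, hYcard, hY⟩ := exists_hits_card_le (separatingLinks E u v) hne
    have hYuv := notMem_sup_of_subset_separatingLinks (Subset.refl (separatingLinks E u v))
    have hYu : u ∉ Y := fun h => hYuv.1 (hYC h)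
    have hYv : v ∉ Y := fun h => hYuv.2 (hYC h)
    have hYmem := hdet.mem_separatingLinks_of_hits_of_card_le hle hn huv hC hYu hYv hY (by omega)
    obtain ⟨c, hc, hcY⟩ := exists_mem_ne (s := separatingLinks E u v) (by omega) Y
    exact hY c hc (hover c hc Y hYmem.1 hcY)

theorem two_mul_threshold_le_weight_add [Fintype V] (hdet : Detectable k k E)
    (hle : ∀ h ∈ E, #h ≤ k) (hne : ∀ h ∈ E, h.Nonempty) (hk : 3 ≤ k)
    (hn : 3 * k ≤ Fintype.card V) {w : V} (huw : u ≠ w) (hu : weight E u < threshold k)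
    {e : Finset V} (he : e ∈ E) (hue : u ∈ e) (hwe : w ∈ e) :
    2 * threshold k ≤ weight E u + weight E w := by
  have hk' : (0 : ℚ) < k := by exact_mod_cast (show 0 < k by omega)
  have h2t : 2 * threshold k = 1 + 2 / k := by rw [threshold]; ring
  rw [h2t]
  by_cases hw : {w} ∈ E
  · have hwe' : {w} ≠ e := fun h => huw (mem_singleton.1 (h ▸ hue))
    have h1 := inv_card_add_inv_card_le_weight hw he hwe' (mem_singleton_self w) hwe
    have h2 := inv_card_le_weight he hue (E := E)
    have hek : (1 : ℚ) / k ≤ 1 / #e := one_div_le_one_div_of_le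
      (by exact_mod_cast card_pos.2 ⟨u, hue⟩) (by exact_mod_cast hle e he)
    rw [card_singleton, Nat.cast_one, div_one] at h1
    linarith [show (2 : ℚ) / k = 1 / k + 1 / k by ring]
  · have hC := hdet.le_card_separatingLinks hle hk hn huw (singleton_notMem_of_weight_lt hk hu) hw
    have hcount := card_separatingLinks_add_le E u w
    have hshared : 0 < #{h ∈ E | u ∈ h ∧ w ∈ h} := card_pos.2 ⟨e, mem_filter.2 ⟨he, hue, hwe⟩⟩
    have hdegs : (k : ℚ) + 2 ≤ hdeg E u + hdeg E w := by
      exact_mod_cast (show k + 2 ≤ hdeg E u + hdeg E w by omega)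
    calc 1 + 2 / (k : ℚ) = (k + 2) / k := by field_simp
      _ ≤ (hdeg E u + hdeg E w) / k := by gcongr
      _ = hdeg E u / k + hdeg E w / k := add_div _ _ _
      _ ≤ weight E u + weight E w :=
        add_le_add (hdeg_div_le_weight hne hle u) (hdeg_div_le_weight hne hle w)

theorem notMem_of_weight_lt [Fintype V] (hdet : Detectable k k E) (hle : ∀ h ∈ E, #h ≤ k)
    (hne : ∀ h ∈ E, h.Nonempty) (hk : 3 ≤ k) (hn : 3 * k ≤ Fintype.card V) (huv : u ≠ v)
    (hu : weight E u < threshold k) (hv : weight E v < threshold k) {e : Finset V} (he : e ∈ E)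
    (hue : u ∈ e) : v ∉ e := fun hve => by
  have := hdet.two_mul_threshold_le_weight_add hle hne hk hn huv hu he hue hve
  linarith

theorem le_hdeg_add_hdeg [Fintype V] (hdet : Detectable k k E) (hle : ∀ h ∈ E, #h ≤ k)
    (hk : 3 ≤ k) (hn : 3 * k ≤ Fintype.card V) (huv : u ≠ v) (hu : {u} ∉ E) (hv : {v} ∉ E) :
    k ≤ hdeg E u + hdeg E v :=
  (hdet.le_card_separatingLinks hle hk hn huv hu hv).trans
    ((Nat.le_add_right _ _).trans (card_separatingLinks_add_le E u v))

theorem one_le_weight_of_hdeg_eq_zero [Fintype V] (hdet : Detectable k k E)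
    (hle : ∀ h ∈ E, #h ≤ k) (hne : ∀ h ∈ E, h.Nonempty) (hk : 3 ≤ k)
    (hn : 3 * k ≤ Fintype.card V) (hu : hdeg E u = 0) {x : V} (hxu : x ≠ u) :
    1 ≤ weight E x := by
  by_cases hx : {x} ∈ E
  · simpa using inv_card_le_weight hx (mem_singleton_self x)
  · have hsu : {u} ∉ E := fun h => by
      have : 0 < hdeg E u := card_pos.2 ⟨{u}, mem_filter.2 ⟨h, mem_singleton_self u⟩⟩
      omega
    have := hdet.le_hdeg_add_hdeg hle hk hn hxu.symm hsu hx
    have hk' : (0 : ℚ) < k := by exact_mod_cast (show 0 < k by omega)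
    calc (1 : ℚ) = k / k := (div_self hk'.ne').symm
      _ ≤ hdeg E x / k := by gcongr; exact_mod_cast (show k ≤ hdeg E x by omega)
      _ ≤ weight E x := hdeg_div_le_weight hne hle x

theorem eq_three_of_hdeg_add_hdeg_eq [Fintype V] (hdet : Detectable k k E)
    (hle : ∀ h ∈ E, #h ≤ k) (hne : ∀ h ∈ E, h.Nonempty) (hk : 3 ≤ k)
    (hn : 3 * k ≤ Fintype.card V) (huv : u ≠ v) (hu : weight E u < threshold k)
    (hv : weight E v < threshold k) (hdk : hdeg E u + hdeg E v = k) {w : V}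
    {e₁ e₂ : Finset V} (he₁ : e₁ ∈ E) (he₂ : e₂ ∈ E) (hu₁ : u ∈ e₁) (hw₁ : w ∈ e₁)
    (hv₂ : v ∈ e₂) (hw₂ : w ∈ e₂) : k = 3 ∧ #e₁ = 3 ∧ #e₂ = 3 := by
  have hsu := singleton_notMem_of_weight_lt hk hu
  have hsv := singleton_notMem_of_weight_lt hk hv
  have hv₁ : v ∉ e₁ := hdet.notMem_of_weight_lt hle hne hk hn huv hu hv he₁ hu₁
  have hu₂ : u ∉ e₂ := hdet.notMem_of_weight_lt hle hne hk hn huv.symm hv hu he₂ hv₂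
  have hc₁ : e₁.erase u ∈ separatingLinks E u v :=
    mem_separatingLinks.2 (.inl ⟨e₁, he₁, hu₁, hv₁, rfl⟩)
  have hc₂ : e₂.erase v ∈ separatingLinks E u v :=
    mem_separatingLinks.2 (.inr ⟨e₂, he₂, hv₂, hu₂, rfl⟩)
  have hCk : #(separatingLinks E u v) = k := by
    have := card_separatingLinks_add_le E u v
    have := hdet.le_card_separatingLinks hle hk hn huv hsu hsv
    omega
  have hc₁₂ : e₁.erase u ≠ e₂.erase v := fun h => by
    have := card_separatingLinks_lt he₁ he₂ hu₁ hv₁ hv₂ hu₂ h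
    omega
  -- a third link with one point comes from a second edge, of size two, at `u` or `v`
  have htwo : ∀ g ∈ separatingLinks E u v, g ≠ e₁.erase u → g ≠ e₂.erase v → 2 ≤ #g := by
    intro g hg hg₁ hg₂
    by_contra! hg1
    rcases mem_separatingLinks.1 hg with ⟨e, he, hue, -, rfl⟩ | ⟨e, he, hve, -, rfl⟩
    · rw [card_erase_of_mem hue] at hg1
      exact hu.not_ge (threshold_le_weight_of_card_le_two hle he he₁
        (by rintro rfl; exact hg₁ rfl) hue hu₁ (by omega))
    · rw [card_erase_of_mem hve] at hg1
      exact hv.not_ge (threshold_le_weight_of_card_le_two hle he he₂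
        (by rintro rfl; exact hg₂ rfl) hve hv₂ (by omega))
  have hlinks : ∀ c ∈ separatingLinks E u v, c.Nonempty :=
    fun c hc => nonempty_of_mem_separatingLinks hsu hsv hc
  have hsup := notMem_sup_of_subset_separatingLinks (Subset.refl (separatingLinks E u v))
  have hmeet : IsMeetBounded (separatingLinks E u v) := fun D hD X hX hDX => by
    have := hdet.card_add_le_of_not_disjoint hle hn huv (by omega) hlinks hD hDX
      (fun h => hsup.1 (hX h)) (fun h => hsup.2 (hX h))
    omega
  obtain ⟨hk3, h₁, h₂⟩ := hmeet.eq_three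
    (fun T hT hTh hTk => hdet.mem_separatingLinks_of_hits_of_card_le hle hn huv (by omega)
      (fun h => hsup.1 (hT h)) (fun h => hsup.2 (hT h)) hTh hTk)
    hCk hk hlinks hc₁ hc₂ hc₁₂ (mem_erase.2 ⟨fun h => hu₂ (h ▸ hw₂), hw₁⟩)
    (mem_erase.2 ⟨fun h => hv₁ (h ▸ hw₁), hw₂⟩) htwo
  rw [card_erase_of_mem hu₁] at h₁
  rw [card_erase_of_mem hv₂] at h₂
  exact ⟨hk3, by omega, by omega⟩

theorem card_div_le_weight [Fintype V] (hdet : Detectable k k E) (hle : ∀ h ∈ E, #h ≤ k)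
    (hne : ∀ h ∈ E, h.Nonempty) (hk : 3 ≤ k) (hn : 3 * k ≤ Fintype.card V) (w : V) :
    (#(lightNeighbors E k w) : ℚ) / k ≤ weight E w := by
  set R := lightNeighbors E k w
  have hR : ∀ u ∈ R, ∃ e ∈ E, u ∈ e ∧ w ∈ e :=
    fun u hu => (mem_neighbors.1 (mem_lightNeighbors.1 hu).2).2
  choose! f hf using hR
  have hinj : Set.InjOn f R := fun u hu u' hu' h => by
    by_contra huu'
    exact hdet.notMem_of_weight_lt hle hne hk hn huu' (mem_lightNeighbors.1 hu).1
      (mem_lightNeighbors.1 hu').1 (hf u hu).1 (hf u hu).2.1 (h ▸ (hf u' hu').2.1)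
  have himage : ∀ e ∈ R.image f, e ∈ E ∧ w ∈ e := by
    simp only [mem_image]
    rintro e ⟨u, hu, rfl⟩
    exact ⟨(hf u hu).1, (hf u hu).2.2⟩
  rw [← card_image_of_injOn hinj]
  refine (card_div_le_sum_inv_card (fun e he => hne e (himage e he).1)
    fun e he => hle e (himage e he).1).trans
    (sum_le_sum_of_subset_of_nonneg (fun e he => mem_filter.2 (himage e he)) fun _ _ _ => ?_)
  positivity

theorem two_mul_hdeg_eq_of_four_le [Fintype V] (hdet : Detectable k k E)
    (hle : ∀ h ∈ E, #h ≤ k) (hne : ∀ h ∈ E, h.Nonempty) (hk : 4 ≤ k)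
    (hn : 3 * k ≤ Fintype.card V) {u' w : V} (huu' : u ≠ u') (hu : weight E u < threshold k)
    (hu' : weight E u' < threshold k) {e e' : Finset V} (he : e ∈ E) (he' : e' ∈ E)
    (hue : u ∈ e) (hwe : w ∈ e) (hu'e' : u' ∈ e') (hwe' : w ∈ e') : 2 * hdeg E u = k + 1 := by
  have h1 := two_mul_hdeg_lt hne hle (by omega) hu
  have h2 := two_mul_hdeg_lt hne hle (by omega) hu'
  have h3 := hdet.le_hdeg_add_hdeg hle (by omega) hn huu'
    (singleton_notMem_of_weight_lt (by omega) hu) (singleton_notMem_of_weight_lt (by omega) hu')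
  have h4 : hdeg E u + hdeg E u' ≠ k := fun h => by
    have := (hdet.eq_three_of_hdeg_add_hdeg_eq hle hne (by omega) hn huu' hu hu' h he he' hue hwe
      hu'e' hwe').1
    omega
  omega

theorem card_eq_three_of_common_neighbor [Fintype V] (hdet : Detectable 3 3 E)
    (hle : ∀ h ∈ E, #h ≤ 3) (hne : ∀ h ∈ E, h.Nonempty) (hn : 9 ≤ Fintype.card V) {u' w : V}
    (huu' : u ≠ u') (hu : weight E u < threshold 3) (hu' : weight E u' < threshold 3)
    {e e' : Finset V} (he : e ∈ E) (he' : e' ∈ E) (hue : u ∈ e) (hwe : w ∈ e) (hu'e' : u' ∈ e')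
    (hwe' : w ∈ e') {h : Finset V} (hh : h ∈ E) (huh : u ∈ h) : #h = 3 := by
  have h1 := two_mul_hdeg_lt hne hle (by norm_num) hu
  have h2 := two_mul_hdeg_lt hne hle (by norm_num) hu'
  have h3 := hdet.le_hdeg_add_hdeg hle le_rfl hn huu'
    (singleton_notMem_of_weight_lt le_rfl hu) (singleton_notMem_of_weight_lt le_rfl hu')
  have hpos : 0 < hdeg E u := card_pos.2 ⟨e, mem_filter.2 ⟨he, hue⟩⟩
  by_cases hd : hdeg E u = 1
  · have hhe : h = e :=
      card_le_one.1 hd.le h (mem_filter.2 ⟨hh, huh⟩) e (mem_filter.2 ⟨he, hue⟩)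
    subst hhe
    exact (hdet.eq_three_of_hdeg_add_hdeg_eq hle hne le_rfl hn huu' hu hu' (by omega) hh he' huh
      hwe hu'e' hwe').2.1
  · have hd2 : (hdeg E u : ℚ) = 2 := by exact_mod_cast (show hdeg E u = 2 by omega)
    have hw := inv_card_add_le_weight hne hle hh huh
    rw [hd2] at hw
    have hh0 : (0 : ℚ) < #h := by exact_mod_cast card_pos.2 ⟨u, huh⟩
    have hlt : 1 / (#h : ℚ) < 1 / 2 := by norm_num [threshold] at hu hw ⊢; linarith
    rw [div_lt_div_iff₀ hh0 (by norm_num)] at hlt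
    have := hle h hh
    have : 2 < #h := by exact_mod_cast (show (2 : ℚ) < #h by linarith)
    omega

theorem sub_weight_le_of_mem_neighbors [Fintype V] (hdet : Detectable k k E)
    (hle : ∀ h ∈ E, #h ≤ k) (hne : ∀ h ∈ E, h.Nonempty) (hk : 3 ≤ k)
    (hn : 3 * k ≤ Fintype.card V) {w : V} (hu : weight E u < threshold k)
    (hw : w ∈ neighbors E u) :
    0 ≤ threshold k - weight E u ∧ threshold k - weight E u ≤ weight E w - threshold k := by
  obtain ⟨hwu, e, he, hue, hwe⟩ := mem_neighbors.1 hw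
  have := hdet.two_mul_threshold_le_weight_add hle hne hk hn hwu.symm hu he hue hwe
  constructor <;> linarith

theorem threshold_add_sum_le_weight_of_four_le [Fintype V] (hdet : Detectable k k E)
    (hle : ∀ h ∈ E, #h ≤ k) (hne : ∀ h ∈ E, h.Nonempty) (hk : 4 ≤ k)
    (hn : 3 * k ≤ Fintype.card V) {w : V} (hw : threshold k ≤ weight E w)
    (hR : 2 ≤ #(lightNeighbors E k w)) :
    threshold k + ∑ u ∈ lightNeighbors E k w,
      (threshold k - weight E u) / #(neighbors E u) ≤ weight E w := by
  set R := lightNeighbors E k w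
  have hk' : (0 : ℚ) < k := by exact_mod_cast (show 0 < k by omega)
  have hmem : ∀ u ∈ R, weight E u < threshold k ∧ w ≠ u ∧ ∃ e ∈ E, u ∈ e ∧ w ∈ e :=
    fun u hu => ⟨(mem_lightNeighbors.1 hu).1, mem_neighbors.1 (mem_lightNeighbors.1 hu).2⟩
  have hdu : ∀ u ∈ R, 2 * hdeg E u = k + 1 := by
    intro u hu
    obtain ⟨u', hu', hu'u⟩ := exists_mem_ne hR u
    obtain ⟨hu, -, e, he, hue, hwe⟩ := hmem u hu
    obtain ⟨hu', -, e', he', hue', hwe'⟩ := hmem u' hu'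
    exact hdet.two_mul_hdeg_eq_of_four_le hle hne hk hn hu'u.symm hu hu' he he' hue hwe hue' hwe'
  have hN : ∀ u ∈ R, ((k : ℚ) + 3) / 2 ≤ #(neighbors E u) := by
    intro u hu
    have := add_three_le_two_mul_card_neighbors hne hle hk (hmem u hu).1 (hdu u hu)
    have : (k : ℚ) + 3 ≤ 2 * #(neighbors E u) := by exact_mod_cast this
    linarith
  have hsurplus : ∀ u ∈ R, 0 ≤ threshold k - weight E u ∧
      threshold k - weight E u ≤ weight E w - threshold k := fun u hu =>
    hdet.sub_weight_le_of_mem_neighbors hle hne (by omega) hn (mem_lightNeighbors.1 hu).1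
      (mem_lightNeighbors.1 hu).2
  have hsmall : ∀ u ∈ R, 0 ≤ threshold k - weight E u ∧
      threshold k - weight E u ≤ 1 / (2 * k) := fun u hu =>
    ⟨by linarith [(hmem u hu).1],
      threshold_sub_weight_le_of_two_mul_hdeg_eq hne hle (by omega) (hdu u hu)⟩
  have hQ := hdet.card_div_le_weight hle hne (by omega) hn w
  rcases le_or_gt (2 * #R) (k + 3) with hr | hr
  · -- few such neighbours: together they send at most the surplus of `w`
    have h1 := sum_div_le_card_mul_div (by positivity) hsurplus hN
    have hr' : (#R : ℚ) ≤ (k + 3) / 2 := by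
      have : (2 * #R : ℚ) ≤ k + 3 := by exact_mod_cast hr
      linarith
    have h2 : (#R : ℚ) * (weight E w - threshold k) / ((k + 3) / 2) ≤
        weight E w - threshold k := by
      rw [div_le_iff₀ (by positivity)]
      have := mul_le_mul_of_nonneg_right hr' (sub_nonneg.2 hw)
      linarith
    linarith
  · -- many: each sends at most `1 / (k (k + 3))`, while `w` has weight at least `#R / k`
    have h1 := sum_div_le_card_mul_div (by positivity) hsmall hN
    have hr' : (k : ℚ) + 3 ≤ 2 * #R := by exact_mod_cast hr.le
    have key : #R / k - #R * (1 / (2 * k)) / ((k + 3) / 2) - threshold k =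
        (k + 2) * (2 * #R - (k + 3)) / (2 * k * (k + 3)) := by
      rw [threshold]; field_simp; ring
    have : (0 : ℚ) ≤ (k + 2) * (2 * #R - (k + 3)) / (2 * k * (k + 3)) :=
      div_nonneg (mul_nonneg (by positivity) (by linarith)) (by positivity)
    linarith

theorem weight_eq_hdeg_div_three [Fintype V] (hdet : Detectable 3 3 E)
    (hle : ∀ h ∈ E, #h ≤ 3) (hne : ∀ h ∈ E, h.Nonempty) (hn : 9 ≤ Fintype.card V) {w : V}
    (hR : 2 ≤ #(lightNeighbors E 3 w)) (hu : u ∈ lightNeighbors E 3 w) :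
    (hdeg E u = 1 ∨ hdeg E u = 2) ∧ weight E u = hdeg E u / 3 ∧
      (hdeg E u : ℚ) + 1 ≤ #(neighbors E u) := by
  obtain ⟨u', hu', hu'u⟩ := exists_mem_ne hR u
  obtain ⟨hu, -, e, he, hue, hwe⟩ := And.intro (mem_lightNeighbors.1 hu).1
    (mem_neighbors.1 (mem_lightNeighbors.1 hu).2)
  obtain ⟨hu', -, e', he', hue', hwe'⟩ := And.intro (mem_lightNeighbors.1 hu').1
    (mem_neighbors.1 (mem_lightNeighbors.1 hu').2)
  have htriple : ∀ h ∈ E, u ∈ h → #h = 3 := fun h hh huh =>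
    hdet.card_eq_three_of_common_neighbor hle hne hn hu'u.symm hu hu' he he' hue hwe hue' hwe'
      hh huh
  have h2 := two_mul_hdeg_lt hne hle (by norm_num) hu
  have h0 : 0 < hdeg E u := card_pos.2 ⟨e, mem_filter.2 ⟨he, hue⟩⟩
  exact ⟨by omega, by exact_mod_cast weight_eq_of_forall_card_eq htriple,
    by exact_mod_cast hdeg_add_one_le_card_neighbors htriple h0 (by omega)⟩

theorem charge_le_of_hdeg_eq_two [Fintype V] (hdet : Detectable 3 3 E)
    (hle : ∀ h ∈ E, #h ≤ 3) (hne : ∀ h ∈ E, h.Nonempty) (hn : 9 ≤ Fintype.card V) {w : V}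
    (hR : 2 ≤ #(lightNeighbors E 3 w)) (hu : u ∈ lightNeighbors E 3 w) (hd : hdeg E u = 2) :
    (0 ≤ threshold 3 - weight E u ∧ threshold 3 - weight E u ≤ 1 / 6) ∧
      (3 : ℚ) ≤ #(neighbors E u) := by
  obtain ⟨-, hwu, hN⟩ := hdet.weight_eq_hdeg_div_three hle hne hn hR hu
  rw [hd] at hwu hN
  rw [hwu]
  norm_num [threshold] at hN ⊢
  exact hN

/-- The deficit `1/2` of a neighbour `u₁` of degree one is also a surplus of `w`. -/
theorem threshold_add_sum_le_weight_of_hdeg_eq_one [Fintype V] (hdet : Detectable 3 3 E)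
    (hle : ∀ h ∈ E, #h ≤ 3) (hne : ∀ h ∈ E, h.Nonempty) (hn : 9 ≤ Fintype.card V) {w u₁ : V}
    (hR : 2 ≤ #(lightNeighbors E 3 w)) (hu₁ : u₁ ∈ lightNeighbors E 3 w) (hd₁ : hdeg E u₁ = 1) :
    threshold 3 + ∑ u ∈ lightNeighbors E 3 w,
      (threshold 3 - weight E u) / #(neighbors E u) ≤ weight E w := by
  set R := lightNeighbors E 3 w
  have hrest : ∀ u ∈ R.erase u₁, hdeg E u = 2 := by
    intro u hu
    obtain ⟨huu₁, huR⟩ := mem_erase.1 hu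
    have := hdet.le_hdeg_add_hdeg hle le_rfl hn huu₁
      (singleton_notMem_of_weight_lt le_rfl (mem_lightNeighbors.1 huR).1)
      (singleton_notMem_of_weight_lt le_rfl (mem_lightNeighbors.1 hu₁).1)
    have := (hdet.weight_eq_hdeg_div_three hle hne hn hR huR).1
    omega
  obtain ⟨-, hw₁, hN₁⟩ := hdet.weight_eq_hdeg_div_three hle hne hn hR hu₁
  rw [hd₁, Nat.cast_one] at hw₁ hN₁
  have hfirst : (threshold 3 - weight E u₁) / #(neighbors E u₁) ≤ 1 / 4 := by
    rw [hw₁, div_le_iff₀ (by linarith)]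
    norm_num [threshold]
    linarith
  have hsum := sum_div_le_card_mul_div (R := R.erase u₁) (by norm_num : (0 : ℚ) < 3)
    (fun u hu => (hdet.charge_le_of_hdeg_eq_two hle hne hn hR (mem_of_mem_erase hu)
      (hrest u hu)).1)
    (fun u hu => (hdet.charge_le_of_hdeg_eq_two hle hne hn hR (mem_of_mem_erase hu)
      (hrest u hu)).2)
  rw [card_erase_of_mem hu₁, Nat.cast_sub (card_pos.2 ⟨u₁, hu₁⟩), Nat.cast_one] at hsum
  have hs := (hdet.sub_weight_le_of_mem_neighbors hle hne le_rfl hn (mem_lightNeighbors.1 hu₁).1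
    (mem_lightNeighbors.1 hu₁).2).2
  have hQ : (#R : ℚ) / 3 ≤ weight E w := by
    exact_mod_cast hdet.card_div_le_weight hle hne le_rfl hn w
  have ht : threshold 3 = 5 / 6 := by norm_num [threshold]
  rw [ht, hw₁] at hs
  rw [← add_sum_erase _ _ hu₁]
  rcases le_or_gt #R 5 with hr | hr
  · have : (#R : ℚ) ≤ 5 := by exact_mod_cast hr
    linarith
  · have : (6 : ℚ) ≤ #R := by exact_mod_cast hr
    linarith

theorem threshold_add_sum_le_weight_of_three [Fintype V] (hdet : Detectable 3 3 E)
    (hle : ∀ h ∈ E, #h ≤ 3) (hne : ∀ h ∈ E, h.Nonempty) (hn : 9 ≤ Fintype.card V) {w : V}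
    (hR : 2 ≤ #(lightNeighbors E 3 w)) :
    threshold 3 + ∑ u ∈ lightNeighbors E 3 w,
      (threshold 3 - weight E u) / #(neighbors E u) ≤ weight E w := by
  set R := lightNeighbors E 3 w
  by_cases h1 : ∃ u₁ ∈ R, hdeg E u₁ = 1
  · obtain ⟨u₁, hu₁, hd₁⟩ := h1
    exact hdet.threshold_add_sum_le_weight_of_hdeg_eq_one hle hne hn hR hu₁ hd₁
  push Not at h1
  have hd2 : ∀ u ∈ R, hdeg E u = 2 := fun u hu =>
    (hdet.weight_eq_hdeg_div_three hle hne hn hR hu).1.resolve_left (h1 u hu)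
  have hsum := sum_div_le_card_mul_div (R := R) (by norm_num : (0 : ℚ) < 3)
    (fun u hu => (hdet.charge_le_of_hdeg_eq_two hle hne hn hR hu (hd2 u hu)).1)
    (fun u hu => (hdet.charge_le_of_hdeg_eq_two hle hne hn hR hu (hd2 u hu)).2)
  obtain ⟨u, hu⟩ := card_pos.1 (show 0 < #R by omega)
  have hs := (hdet.sub_weight_le_of_mem_neighbors hle hne le_rfl hn (mem_lightNeighbors.1 hu).1
    (mem_lightNeighbors.1 hu).2).2
  have hQ : (#R : ℚ) / 3 ≤ weight E w := by
    exact_mod_cast hdet.card_div_le_weight hle hne le_rfl hn w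
  have ht : threshold 3 = 5 / 6 := by norm_num [threshold]
  rw [ht, (hdet.weight_eq_hdeg_div_three hle hne hn hR hu).2.1, hd2 u hu, Nat.cast_ofNat] at hs
  rcases le_or_gt #R 3 with hr | hr
  · have : (#R : ℚ) ≤ 3 := by exact_mod_cast hr
    linarith
  · have : (3 : ℚ) ≤ #R := by exact_mod_cast hr.le
    linarith

theorem threshold_add_sum_le_weight [Fintype V] (hdet : Detectable k k E)
    (hle : ∀ h ∈ E, #h ≤ k) (hne : ∀ h ∈ E, h.Nonempty) (hk : 3 ≤ k)
    (hn : 3 * k ≤ Fintype.card V) {w : V} (hw : threshold k ≤ weight E w) :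
    threshold k + ∑ u ∈ lightNeighbors E k w,
      (threshold k - weight E u) / #(neighbors E u) ≤ weight E w := by
  set R := lightNeighbors E k w
  rcases lt_or_ge #R 2 with hR | hR
  · have := sum_div_le_card_mul_div (R := R) (n := fun u => #(neighbors E u)) one_pos
      (fun u hu => hdet.sub_weight_le_of_mem_neighbors hle hne hk hn (mem_lightNeighbors.1 hu).1
        (mem_lightNeighbors.1 hu).2)
      fun u hu => by exact_mod_cast card_pos.2 ⟨w, (mem_lightNeighbors.1 hu).2⟩
    have hR1 : (#R : ℚ) ≤ 1 := by exact_mod_cast (show #R ≤ 1 by omega)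
    have := mul_le_mul_of_nonneg_right hR1 (sub_nonneg.2 hw)
    rw [div_one] at *
    linarith
  · rcases eq_or_lt_of_le hk with rfl | hk4
    · exact hdet.threshold_add_sum_le_weight_of_three hle hne (by omega) hR
    · exact hdet.threshold_add_sum_le_weight_of_four_le hle hne hk4 hn hw hR

theorem card_mul_threshold_le_card [Fintype V] (hdet : Detectable k k E)
    (hle : ∀ h ∈ E, #h ≤ k) (hne : ∀ h ∈ E, h.Nonempty) (hk : 3 ≤ k)
    (hn : 3 * k ≤ Fintype.card V) : Fintype.card V * threshold k ≤ #E := by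
  rw [← sum_weight hne]
  by_cases hiso : ∃ u, hdeg E u = 0
  · obtain ⟨u, hu⟩ := hiso
    have ht : threshold k ≤ 5 / 6 := by
      have : (1 : ℚ) / k ≤ 1 / 3 := one_div_le_one_div_of_le (by norm_num) (by exact_mod_cast hk)
      rw [threshold]
      linarith
    have hcard : (9 : ℚ) ≤ Fintype.card V := by exact_mod_cast (show 9 ≤ Fintype.card V by omega)
    calc (Fintype.card V : ℚ) * threshold k ≤ Fintype.card V - 1 := by nlinarith
      _ = ∑ x ∈ univ.erase u, (1 : ℚ) := by
        rw [sum_const, card_erase_of_mem (mem_univ u), card_univ, nsmul_one,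
          Nat.cast_sub (Fintype.card_pos_iff.2 ⟨u⟩), Nat.cast_one]
      _ ≤ ∑ x ∈ univ.erase u, weight E x := sum_le_sum fun x hx =>
        hdet.one_le_weight_of_hdeg_eq_zero hle hne hk hn hu (ne_of_mem_erase hx)
      _ ≤ ∑ x, weight E x := sum_le_sum_of_subset_of_nonneg (erase_subset u univ)
        fun x _ _ => weight_nonneg E x
  · push Not at hiso
    refine card_mul_le_sum_of_discharging _ _ (neighbors E) (fun u hu => ⟨?_, fun w hw => ?_⟩)
      fun w hw => hdet.threshold_add_sum_le_weight hle hne hk hn hw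
    · obtain ⟨e, he⟩ := card_pos.1 (Nat.pos_of_ne_zero (hiso u))
      rw [mem_filter] at he
      have he2 : 1 < #e := by
        by_contra! h
        have : e = {u} :=
          eq_singleton_iff_unique_mem.2 ⟨he.2, fun x hx => card_le_one.1 h x hx u he.2⟩
        exact singleton_notMem_of_weight_lt hk hu (this ▸ he.1)
      exact (card_pos.1 (by rw [card_erase_of_mem he.2]; omega)).mono
        (erase_subset_neighbors he.1 he.2)
    · by_contra! h
      obtain ⟨hwu, e, he, hue, hwe⟩ := mem_neighbors.1 hw
      exact hdet.notMem_of_weight_lt hle hne hk hn hwu.symm hu h he hue hwe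

end Detectable

theorem stmt_5_general (k n : ℕ) (hk : 3 ≤ k) (hn : 3 * k ≤ n)
    (E : Finset (Finset (Fin n)))
    (hne : ∀ h ∈ E, h.Nonempty) (hcardle : ∀ h ∈ E, h.card ≤ k)
    (hdet : Detectable k k E) :
    (n : ℚ) / 2 + (n : ℚ) / k ≤ E.card := by
  have := hdet.card_mul_threshold_le_card hcardle hne hk (by rwa [Fintype.card_fin])
  rw [Fintype.card_fin, threshold] at this
  linarith [show (n : ℚ) * (1 / 2 + 1 / k) = n / 2 + n / k by ring]

theorem stmt_5 (k n : ℕ) (hk : 3 ≤ k) (hk4 : k ≠ 4) (hn : 3 * k ≤ n)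
    (hn3 : k = 3 → 18 ≤ n)
    (E : Finset (Finset (Fin n)))
    (hne : ∀ h ∈ E, h.Nonempty) (hcardle : ∀ h ∈ E, h.card ≤ k)
    (hdet : Detectable k k E) :
    (n : ℚ) / 2 + (n : ℚ) / k ≤ E.card :=
  stmt_5_general k n hk hn E hne hcardle hdet
end

section
/- If H is a k-uniform hypergraph with minimum degree at least k'/2 + 1 and girth at least 5 (in the sense of Berge), where k' ≤ k, then H is k'-detectable. -/
/-- A hypergraph (edge set `E`) has Berge girth at least 5:
no Berge cycle of length 2, 3, or 4. -/
def GirthGe5 {V : Type*} (E : Finset (Finset V)) : Prop :=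
  ∀ ℓ : ℕ, 2 ≤ ℓ → ℓ < 5 →
    ¬ ∃ (v : ZMod ℓ → V) (e : ZMod ℓ → Finset V),
        Function.Injective v ∧ Function.Injective e ∧
        (∀ i, e i ∈ E) ∧ (∀ i : ZMod ℓ, v i ∈ e i ∧ v (i + 1) ∈ e i)

/-!
If `B₁ ≠ B₂` have the same detection vector, then every edge meets `B₁` iff it meets `B₂`. For
`x ∈ B₁ \ B₂`, every edge through `x` meets `B₂`, and since there are no 2-cycles these traces on
`B₂` are pairwise disjoint.

If `B₁ \ B₂` contains `x ≠ u`, call `z ∈ B₂` a pendant of `x` if some edge through `x` meets `B₂`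
in `{z}` alone. Counting traces, the degree bound gives `x` at least `|B₂ \ N(x)| + 2` pendants,
where `N(x)` is the set of neighbours of `x` in `B₂`; as there are no cycles of length three or
four, `u` is adjacent to at most one of them, so `|B₂ \ N(u)| > |B₂ \ N(x)|`. Exchanging `x` and
`u` gives a contradiction.

If `B₁ = C ∪ {x}` and `B₂ = C ∪ {y}`, the edges through `x` or `y` other than a common one have
nonempty traces on `C`, disjoint when `x` and `y` share an edge and overlapping in at most one
vertex otherwise. Hence `deg x + deg y ≤ |C| + 2 = k' + 1`, contradicting the degree bound.
-/

section

open Finset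

variable {V : Type*} {E E' : Finset (Finset V)}

theorem GirthGe5.mono (hg : GirthGe5 E) (h : E' ⊆ E) : GirthGe5 E' :=
  fun ℓ h2 h5 ⟨v, e, hv, he, hE, hmem⟩ => hg ℓ h2 h5 ⟨v, e, hv, he, fun i => h (hE i), hmem⟩

/-- `ZMod (n + 1)` is `Fin (n + 1)` by definition, so cycles can be written as `![...]`. -/
theorem GirthGe5.not_cycle (hg : GirthGe5 E) {n : ℕ} (h1 : 1 ≤ n) (h4 : n < 4)
    (v : Fin (n + 1) → V) (e : Fin (n + 1) → Finset V)
    (hv : Function.Injective v) (he : Function.Injective e) (hE : ∀ i, e i ∈ E)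
    (hmem : ∀ i, v i ∈ e i ∧ v (i + 1) ∈ e i) : False :=
  hg (n + 1) (by omega) (by omega) ⟨v, e, hv, he, hE, hmem⟩

theorem GirthGe5.eq_of_mem_of_mem (hg : GirthGe5 E) {e f : Finset V} {a b : V}
    (he : e ∈ E) (hf : f ∈ E) (hab : a ≠ b)
    (hae : a ∈ e) (hbe : b ∈ e) (haf : a ∈ f) (hbf : b ∈ f) : e = f := by
  by_contra hef
  refine hg.not_cycle (n := 1) le_rfl (by norm_num) ![a, b] ![e, f] ?_ ?_ ?_ ?_
  · intro i j; fin_cases i <;> fin_cases j <;> simp [hab, hab.symm]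
  · intro i j; fin_cases i <;> fin_cases j <;> simp [hef, Ne.symm hef]
  · intro i; fin_cases i <;> simp [he, hf]
  · intro i; fin_cases i <;> simp [*]

theorem GirthGe5.not_triangle (hg : GirthGe5 E) {p q r : Finset V} {a b c : V}
    (hp : p ∈ E) (hq : q ∈ E) (hr : r ∈ E) (hpq : p ≠ q) (hqr : q ≠ r) (hpr : p ≠ r)
    (hab : a ≠ b) (hbc : b ≠ c) (hac : a ≠ c)
    (hap : a ∈ p) (hbp : b ∈ p) (hbq : b ∈ q) (hcq : c ∈ q) (hcr : c ∈ r) (har : a ∈ r) :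
    False := by
  refine hg.not_cycle (n := 2) (by norm_num) (by norm_num) ![a, b, c] ![p, q, r] ?_ ?_ ?_ ?_
  · intro i j; fin_cases i <;> fin_cases j <;> simp [*, Ne.symm]
  · intro i j; fin_cases i <;> fin_cases j <;> simp [*, Ne.symm]
  · intro i; fin_cases i <;> simp [*]
  · intro i; fin_cases i <;> simp [*]

theorem GirthGe5.not_quadrilateral (hg : GirthGe5 E) {p q r s : Finset V} {a b c d : V}
    (hp : p ∈ E) (hq : q ∈ E) (hr : r ∈ E) (hs : s ∈ E)
    (hpq : p ≠ q) (hpr : p ≠ r) (hps : p ≠ s) (hqr : q ≠ r) (hqs : q ≠ s) (hrs : r ≠ s)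
    (hab : a ≠ b) (hac : a ≠ c) (had : a ≠ d) (hbc : b ≠ c) (hbd : b ≠ d) (hcd : c ≠ d)
    (hap : a ∈ p) (hbp : b ∈ p) (hbq : b ∈ q) (hcq : c ∈ q)
    (hcr : c ∈ r) (hdr : d ∈ r) (hds : d ∈ s) (has : a ∈ s) : False := by
  refine hg.not_cycle (n := 3) (by norm_num) (by norm_num) ![a, b, c, d] ![p, q, r, s]
    ?_ ?_ ?_ ?_
  · intro i j; fin_cases i <;> fin_cases j <;> simp [*, Ne.symm]
  · intro i j; fin_cases i <;> fin_cases j <;> simp [*, Ne.symm]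
  · intro i; fin_cases i <;> simp [*]
  · intro i; fin_cases i <;> simp [*]

variable [DecidableEq V] {x y u : V} {B C : Finset V}

def incidentEdges (E : Finset (Finset V)) (x : V) : Finset (Finset V) :=
  E.filter (fun h => x ∈ h)

def neighborsIn (E : Finset (Finset V)) (x : V) (B : Finset V) : Finset V :=
  (incidentEdges E x).biUnion (· ∩ B)

def pendantsIn (E : Finset (Finset V)) (x : V) (B : Finset V) : Finset V :=
  ((incidentEdges E x).filter (fun e => #(e ∩ B) = 1)).biUnion (· ∩ B)

@[simp]
theorem mem_incidentEdges {e : Finset V} : e ∈ incidentEdges E x ↔ e ∈ E ∧ x ∈ e :=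
  mem_filter

theorem mem_neighborsIn {z : V} :
    z ∈ neighborsIn E x B ↔ ∃ e ∈ E, x ∈ e ∧ z ∈ e ∧ z ∈ B := by
  simp [neighborsIn, and_assoc]

theorem mem_pendantsIn {z : V} :
    z ∈ pendantsIn E x B ↔ ∃ e ∈ E, x ∈ e ∧ e ∩ B = {z} := by
  simp only [pendantsIn, mem_biUnion, mem_filter, mem_incidentEdges, card_eq_one, and_assoc]
  constructor
  · rintro ⟨e, heE, hxe, ⟨w, hw⟩, hz⟩
    obtain rfl : z = w := by simpa [hw] using hz
    exact ⟨e, heE, hxe, hw⟩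
  · rintro ⟨e, heE, hxe, hz⟩
    exact ⟨e, heE, hxe, ⟨z, hz⟩, by simp [hz]⟩

theorem neighborsIn_subset : neighborsIn E x B ⊆ B :=
  biUnion_subset.2 fun _ _ => inter_subset_right

theorem pendantsIn_subset : pendantsIn E x B ⊆ B :=
  biUnion_subset.2 fun _ _ => inter_subset_right

theorem GirthGe5.pairwiseDisjoint_inter (hg : GirthGe5 E) (hx : x ∉ B) :
    (incidentEdges E x : Set (Finset V)).PairwiseDisjoint (· ∩ B) := by
  intro e he f hf hef
  simp only [mem_coe, mem_incidentEdges] at he hf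
  refine disjoint_left.2 fun z hze hzf => hef ?_
  rw [mem_inter] at hze hzf
  exact hg.eq_of_mem_of_mem he.1 hf.1 (ne_of_mem_of_not_mem hze.2 hx).symm he.2 hze.1 hf.2 hzf.1

theorem GirthGe5.two_mul_card_incidentEdges_le (hg : GirthGe5 E) (hx : x ∉ B)
    (hmeet : ∀ e ∈ incidentEdges E x, (e ∩ B).Nonempty) :
    2 * #(incidentEdges E x) ≤ #(neighborsIn E x B) + #(pendantsIn E x B) := by
  have hdisj := hg.pairwiseDisjoint_inter hx
  rw [neighborsIn, pendantsIn, card_biUnion hdisj,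
    card_biUnion (hdisj.subset (filter_subset _ _)), sum_filter, ← sum_add_distrib,
    mul_comm, ← smul_eq_mul, ← sum_const]
  refine sum_le_sum fun e he => ?_
  have := (hmeet e he).card_pos
  split_ifs <;> omega

/-- Two pendants of `x` next to `u` would close a cycle of length at most four. -/
theorem GirthGe5.card_pendantsIn_inter_neighborsIn_le_one (hg : GirthGe5 E) (hxu : x ≠ u)
    (hx : x ∉ B) (hu : u ∉ B) : #(pendantsIn E x B ∩ neighborsIn E u B) ≤ 1 := by
  refine card_le_one.2 fun z hz z' hz' => by_contra fun hzz => ?_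
  simp only [mem_inter, mem_pendantsIn, mem_neighborsIn] at hz hz'
  obtain ⟨⟨e, heE, hxe, hezB⟩, h, hhE, huh, hzh, hzB⟩ := hz
  obtain ⟨⟨e', he'E, hxe', he'zB⟩, h', hh'E, huh', hz'h', hz'B⟩ := hz'
  have hze : z ∈ e := (mem_inter.1 (hezB ▸ mem_singleton_self z : z ∈ e ∩ B)).1
  have hz'e' : z' ∈ e' := (mem_inter.1 (he'zB ▸ mem_singleton_self z' : z' ∈ e' ∩ B)).1
  have hz'e : z' ∉ e := fun hz'e => hzz (mem_singleton.1 (hezB ▸ mem_inter.2 ⟨hz'e, hz'B⟩)).symm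
  have hze' : z ∉ e' := fun hze' => hzz (mem_singleton.1 (he'zB ▸ mem_inter.2 ⟨hze', hzB⟩))
  have hxz : x ≠ z := ne_of_mem_of_not_mem hzB hx |>.symm
  have hxz' : x ≠ z' := ne_of_mem_of_not_mem hz'B hx |>.symm
  have huz : u ≠ z := ne_of_mem_of_not_mem hzB hu |>.symm
  have huz' : u ≠ z' := ne_of_mem_of_not_mem hz'B hu |>.symm
  have hee' : e ≠ e' := by rintro rfl; contradiction
  by_cases hue : u ∈ e <;> by_cases hue' : u ∈ e'
  · exact hee' (hg.eq_of_mem_of_mem heE he'E hxu hxe hue hxe' hue')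
  · exact hg.not_triangle he'E hh'E heE (by rintro rfl; contradiction)
      (by rintro rfl; contradiction) hee'.symm hxz' huz'.symm hxu hxe' hz'e' hz'h' huh' hue hxe
  · exact hg.not_triangle heE hhE he'E (by rintro rfl; contradiction)
      (by rintro rfl; contradiction) hee' hxz huz.symm hxu hxe hze hzh huh hue' hxe'
  · by_cases hhh' : h = h'
    · subst hhh'
      exact hg.not_triangle heE hhE he'E (by rintro rfl; contradiction)
        (by rintro rfl; contradiction) hee' hxz hzz hxz' hxe hze hzh hz'h' hz'e' hxe'
    · exact hg.not_quadrilateral heE hhE hh'E he'E (by rintro rfl; contradiction)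
        (by rintro rfl; contradiction) hee' hhh' (by rintro rfl; contradiction)
        (by rintro rfl; contradiction) hxz hxu hxz' huz.symm hzz huz'
        hxe hze hzh huh huh' hz'h' hz'e' hxe'

theorem GirthGe5.card_sdiff_neighborsIn_lt (hg : GirthGe5 E) (hxu : x ≠ u) (hx : x ∉ B)
    (hu : u ∉ B) (hmeet : ∀ e ∈ incidentEdges E x, (e ∩ B).Nonempty)
    (hdeg : #B + 2 ≤ 2 * #(incidentEdges E x)) :
    #(B \ neighborsIn E x B) < #(B \ neighborsIn E u B) := by
  have hcount := hg.two_mul_card_incidentEdges_le hx hmeet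
  have hshared := hg.card_pendantsIn_inter_neighborsIn_le_one hxu hx hu
  have hN := card_sdiff_add_card_eq_card (neighborsIn_subset (E := E) (x := x) (B := B))
  have hP := card_sdiff_add_card_inter (pendantsIn E x B) (neighborsIn E u B)
  have hPN : #(pendantsIn E x B \ neighborsIn E u B) ≤ #(B \ neighborsIn E u B) :=
    card_le_card (sdiff_subset_sdiff pendantsIn_subset le_rfl)
  omega

theorem GirthGe5.card_incidentEdges_le_card_neighborsIn (hg : GirthGe5 E) (hx : x ∉ B)
    (hmeet : ∀ e ∈ incidentEdges E x, (e ∩ B).Nonempty) :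
    #(incidentEdges E x) ≤ #(neighborsIn E x B) :=
  card_le_card_biUnion (hg.pairwiseDisjoint_inter hx) hmeet

theorem GirthGe5.card_inter_neighborsIn_le_one (hg : GirthGe5 E) (hxy : x ≠ y)
    (hco : ∀ g ∈ E, x ∈ g → y ∉ g) (hx : x ∉ C) (hy : y ∉ C) :
    #(neighborsIn E x C ∩ neighborsIn E y C) ≤ 1 := by
  refine card_le_one.2 fun z hz z' hz' => by_contra fun hzz => ?_
  simp only [mem_inter, mem_neighborsIn] at hz hz'
  obtain ⟨⟨e, heE, hxe, hze, hzC⟩, f, hfE, hyf, hzf, -⟩ := hz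
  obtain ⟨⟨e', he'E, hxe', hz'e', hz'C⟩, f', hf'E, hyf', hz'f', -⟩ := hz'
  have hxz : x ≠ z := ne_of_mem_of_not_mem hzC hx |>.symm
  have hxz' : x ≠ z' := ne_of_mem_of_not_mem hz'C hx |>.symm
  have hyz : y ≠ z := ne_of_mem_of_not_mem hzC hy |>.symm
  have hyz' : y ≠ z' := ne_of_mem_of_not_mem hz'C hy |>.symm
  have hye : y ∉ e := hco e heE hxe
  have hye' : y ∉ e' := hco e' he'E hxe'
  by_cases hee' : e = e' <;> by_cases hff' : f = f'
  · subst hee' hff'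
    exact hye (hg.eq_of_mem_of_mem heE hfE hzz hze hz'e' hzf hz'f' ▸ hyf)
  · subst hee'
    exact hg.not_triangle hfE heE hf'E (by rintro rfl; contradiction)
      (by rintro rfl; contradiction) hff' hyz hzz hyz' hyf hzf hze hz'e' hz'f' hyf'
  · subst hff'
    exact hg.not_triangle heE hfE he'E (by rintro rfl; contradiction)
      (by rintro rfl; contradiction) hee' hxz hzz hxz' hxe hze hzf hz'f' hz'e' hxe'
  · exact hg.not_quadrilateral heE hfE hf'E he'E (by rintro rfl; contradiction)
      (by rintro rfl; contradiction) hee' hff' (by rintro rfl; contradiction)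
      (by rintro rfl; contradiction) hxz hxy hxz' hyz.symm hzz hyz'
      hxe hze hzf hyf hyf' hz'f' hz'e' hxe'

theorem GirthGe5.disjoint_neighborsIn_erase {g : Finset V} (hg : GirthGe5 E) (hgE : g ∈ E)
    (hxg : x ∈ g) (hyg : y ∈ g) (hxy : x ≠ y) (hx : x ∉ C) (hy : y ∉ C) :
    Disjoint (neighborsIn (E.erase g) x C) (neighborsIn (E.erase g) y C) := by
  refine disjoint_left.2 fun z hzx hzy => ?_
  simp only [mem_neighborsIn, mem_erase] at hzx hzy
  obtain ⟨e, ⟨heg, heE⟩, hxe, hze, hzC⟩ := hzx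
  obtain ⟨f, ⟨hfg, hfE⟩, hyf, hzf, -⟩ := hzy
  by_cases hef : e = f
  · subst hef
    exact heg (hg.eq_of_mem_of_mem heE hgE hxy hxe hyf hxg hyg)
  · exact hg.not_triangle heE hfE hgE hef hfg heg (ne_of_mem_of_not_mem hzC hx).symm
      (ne_of_mem_of_not_mem hzC hy) hxy hxe hze hzf hyf hyg hxg

theorem GirthGe5.card_incidentEdges_add_card_incidentEdges_le (hg : GirthGe5 E) (hxy : x ≠ y)
    (hx : x ∉ C) (hy : y ∉ C) (hmx : ∀ e ∈ incidentEdges E x, (e ∩ insert y C).Nonempty)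
    (hmy : ∀ e ∈ incidentEdges E y, (e ∩ insert x C).Nonempty) :
    #(incidentEdges E x) + #(incidentEdges E y) ≤ #C + 2 := by
  by_cases hco : ∃ g ∈ E, x ∈ g ∧ y ∈ g
  · obtain ⟨g, hgE, hxg, hyg⟩ := hco
    have hmeet {a b : V} (hab : a ≠ b) (hag : a ∈ g) (hbg : b ∈ g)
        (hm : ∀ e ∈ incidentEdges E a, (e ∩ insert b C).Nonempty) :
        ∀ e ∈ incidentEdges (E.erase g) a, (e ∩ C).Nonempty := by
      intro e he
      obtain ⟨⟨heg, heE⟩, hae⟩ := by simpa only [mem_incidentEdges, mem_erase] using he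
      have hbe : b ∉ e := fun hbe => heg (hg.eq_of_mem_of_mem heE hgE hab hae hbe hag hbg)
      simpa [inter_insert_of_notMem hbe] using hm e (mem_incidentEdges.2 ⟨heE, hae⟩)
    have herase (a : V) : #(incidentEdges E a) ≤ #(incidentEdges (E.erase g) a) + 1 := by
      rw [incidentEdges, incidentEdges, filter_erase]
      have := pred_card_le_card_erase (s := E.filter (a ∈ ·)) (a := g)
      omega
    have hg' := hg.mono (erase_subset g E)
    calc #(incidentEdges E x) + #(incidentEdges E y)
        ≤ #(incidentEdges (E.erase g) x) + #(incidentEdges (E.erase g) y) + 2 := by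
          linarith [herase x, herase y]
      _ ≤ #(neighborsIn (E.erase g) x C) + #(neighborsIn (E.erase g) y C) + 2 := by
          gcongr
          · exact hg'.card_incidentEdges_le_card_neighborsIn hx (hmeet hxy hxg hyg hmx)
          · exact hg'.card_incidentEdges_le_card_neighborsIn hy (hmeet hxy.symm hyg hxg hmy)
      _ = #(neighborsIn (E.erase g) x C ∪ neighborsIn (E.erase g) y C) + 2 := by
          rw [card_union_of_disjoint (hg.disjoint_neighborsIn_erase hgE hxg hyg hxy hx hy)]
      _ ≤ #C + 2 := by
          gcongr
          exact union_subset neighborsIn_subset neighborsIn_subset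
  · push Not at hco
    have hmeet {a b : V} (hco : ∀ e ∈ E, a ∈ e → b ∉ e)
        (hm : ∀ e ∈ incidentEdges E a, (e ∩ insert b C).Nonempty) :
        ∀ e ∈ incidentEdges E a, (e ∩ C).Nonempty := by
      intro e he
      have hbe := hco e (mem_incidentEdges.1 he).1 (mem_incidentEdges.1 he).2
      simpa [inter_insert_of_notMem hbe] using hm e he
    have hco' : ∀ e ∈ E, y ∈ e → x ∉ e := fun e he hye hxe => hco e he hxe hye
    calc #(incidentEdges E x) + #(incidentEdges E y)
        ≤ #(neighborsIn E x C) + #(neighborsIn E y C) := by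
          gcongr
          · exact hg.card_incidentEdges_le_card_neighborsIn hx (hmeet hco hmx)
          · exact hg.card_incidentEdges_le_card_neighborsIn hy (hmeet hco' hmy)
      _ = #(neighborsIn E x C ∪ neighborsIn E y C) + #(neighborsIn E x C ∩ neighborsIn E y C) :=
          (card_union_add_card_inter _ _).symm
      _ ≤ #C + 1 := by
          gcongr
          · exact union_subset neighborsIn_subset neighborsIn_subset
          · exact hg.card_inter_neighborsIn_le_one hxy hco hx hy
      _ ≤ #C + 2 := by omega

theorem GirthGe5.card_sdiff_lt_two (hg : GirthGe5 E) {B₁ B₂ : Finset V}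
    (hmeet : ∀ e ∈ E, (e ∩ B₁).Nonempty → (e ∩ B₂).Nonempty)
    (hdeg : ∀ x, #B₂ + 2 ≤ 2 * #(incidentEdges E x)) : #(B₁ \ B₂) < 2 := by
  by_contra! h2
  obtain ⟨x, hx, u, hu, hxu⟩ := one_lt_card.1 h2
  rw [mem_sdiff] at hx hu
  have hmeet' {a : V} (ha : a ∈ B₁) (e : Finset V) (he : e ∈ incidentEdges E a) :
      (e ∩ B₂).Nonempty :=
    hmeet e (mem_incidentEdges.1 he).1 ⟨a, mem_inter.2 ⟨(mem_incidentEdges.1 he).2, ha⟩⟩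
  have := hg.card_sdiff_neighborsIn_lt hxu hx.2 hu.2 (hmeet' hx.1) (hdeg x)
  have := hg.card_sdiff_neighborsIn_lt hxu.symm hu.2 hx.2 (hmeet' hu.1) (hdeg u)
  omega

theorem GirthGe5.card_sdiff_ne_one (hg : GirthGe5 E) {B₁ B₂ : Finset V} (hcard : #B₁ = #B₂)
    (hmeet : ∀ e ∈ E, (e ∩ B₁).Nonempty ↔ (e ∩ B₂).Nonempty)
    (hdeg : ∀ x, #B₂ + 2 ≤ 2 * #(incidentEdges E x)) : #(B₁ \ B₂) ≠ 1 := by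
  intro h1
  obtain ⟨x, hx⟩ := card_eq_one.1 h1
  obtain ⟨y, hy⟩ := card_eq_one.1 ((card_sdiff_comm hcard).symm.trans h1)
  have hx' := mem_sdiff.1 (hx ▸ mem_singleton_self x : x ∈ B₁ \ B₂)
  have hy' := mem_sdiff.1 (hy ▸ mem_singleton_self y : y ∈ B₂ \ B₁)
  have hxy : x ≠ y := ne_of_mem_of_not_mem hx'.1 hy'.2
  have hxC : x ∉ B₁ ∩ B₂ := fun h => hx'.2 (mem_inter.1 h).2
  have hyC : y ∉ B₁ ∩ B₂ := fun h => hy'.2 (mem_inter.1 h).1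
  have hB₁ : B₁ = insert x (B₁ ∩ B₂) := by rw [insert_eq, ← hx, sdiff_union_inter]
  have hB₂ : B₂ = insert y (B₁ ∩ B₂) := by rw [insert_eq, ← hy, inter_comm, sdiff_union_inter]
  have hcount := hg.card_incidentEdges_add_card_incidentEdges_le hxy hxC hyC
    (fun e he => hB₂ ▸ (hmeet e (mem_incidentEdges.1 he).1).1
      ⟨x, mem_inter.2 ⟨(mem_incidentEdges.1 he).2, hB₁ ▸ mem_insert_self _ _⟩⟩)
    (fun e he => hB₁ ▸ (hmeet e (mem_incidentEdges.1 he).1).2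
      ⟨y, mem_inter.2 ⟨(mem_incidentEdges.1 he).2, hB₂ ▸ mem_insert_self _ _⟩⟩)
  have hB₂card := card_insert_of_notMem hyC
  rw [← hB₂] at hB₂card
  have := hdeg x
  have := hdeg y
  omega

theorem GirthGe5.eq_of_nonempty_inter_iff (hg : GirthGe5 E) {B₁ B₂ : Finset V}
    (hcard : #B₁ = #B₂) (hmeet : ∀ e ∈ E, (e ∩ B₁).Nonempty ↔ (e ∩ B₂).Nonempty)
    (hdeg : ∀ x, #B₂ + 2 ≤ 2 * #(incidentEdges E x)) : B₁ = B₂ := by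
  have h2 := hg.card_sdiff_lt_two (fun e he => (hmeet e he).1) hdeg
  have h1 := hg.card_sdiff_ne_one hcard hmeet hdeg
  refine eq_of_subset_of_card_le ?_ hcard.ge
  rw [← sdiff_eq_empty_iff_subset, ← card_eq_zero]
  omega

theorem nonempty_inter_iff_detVal_ne_zero {k : ℕ} {h B : Finset V} :
    (h ∩ B).Nonempty ↔ detVal k h B ≠ 0 := by
  rw [← card_pos, detVal]
  split_ifs <;> omega

end

theorem stmt_7_general {V : Type*} [DecidableEq V] (k k' : ℕ)
    (E : Finset (Finset V))
    (hdeg : ∀ v : V, ((hdeg E v : ℚ)) ≥ (k' : ℚ) / 2 + 1)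
    (hgirth : GirthGe5 E) :
    Detectable k k' E := by
  intro B₁ B₂ hc₁ hc₂ hvec
  refine hgirth.eq_of_nonempty_inter_iff (hc₁.trans hc₂.symm) (fun e he => ?_) fun v => ?_
  · rw [nonempty_inter_iff_detVal_ne_zero (k := k), hvec e he,
      ← nonempty_inter_iff_detVal_ne_zero]
  · have : (k' : ℚ) + 2 ≤ 2 * _root_.hdeg E v := by linarith [hdeg v]
    rw [hc₂]
    exact_mod_cast this

theorem stmt_7 {V : Type*} [DecidableEq V] (k k' : ℕ) (hk' : k' ≤ k)
    (E : Finset (Finset V)) (hunif : ∀ h ∈ E, h.card = k)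
    (hdeg : ∀ v : V, ((hdeg E v : ℚ)) ≥ (k' : ℚ) / 2 + 1)
    (hgirth : GirthGe5 E) :
    Detectable k k' E :=
  stmt_7_general k k' E hdeg hgirth
end

section
/- In a k-uniform hypergraph H with girth at least 5 and minimum degree at least k'/2 + 1, if B is any set of k' vertices (k' ≤ k) and S denotes the set of vertices v such that every hyperedge containing v intersects B, then B ⊆ S and |S| ≤ |B| + 1. -/
namespace GirthGe5

variable {V : Type*} {E : Finset (Finset V)}

-- `ZMod (n + 1)` is `Fin (n + 1)` by definition, so short cycles can be written as vectors.
theorem not_isCycle_fin (hg : GirthGe5 E) {n : ℕ} (hn₁ : 1 ≤ n) (hn₄ : n < 4)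
    (v : Fin (n + 1) → V) (e : Fin (n + 1) → Finset V) (hv : Function.Injective v)
    (he : Function.Injective e) (hE : ∀ i, e i ∈ E) (hve : ∀ i, v i ∈ e i ∧ v (i + 1) ∈ e i) :
    False :=
  hg (n + 1) (by omega) (by omega) ⟨v, e, hv, he, hE, hve⟩

theorem eq_of_mem_of_mem_s8 (hg : GirthGe5 E) {e₁ e₂ : Finset V} (he₁ : e₁ ∈ E) (he₂ : e₂ ∈ E)
    {x y : V} (hxy : x ≠ y) (hx₁ : x ∈ e₁) (hy₁ : y ∈ e₁) (hx₂ : x ∈ e₂) (hy₂ : y ∈ e₂) :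
    e₁ = e₂ := by
  by_contra hne
  refine hg.not_isCycle_fin (n := 1) le_rfl (by norm_num) ![x, y] ![e₁, e₂] ?_ ?_ ?_ ?_
  · intro i j; fin_cases i <;> fin_cases j <;> simp [hxy, hxy.symm]
  · intro i j; fin_cases i <;> fin_cases j <;> simp [hne, Ne.symm hne]
  · intro i; fin_cases i <;> simp [he₁, he₂]
  · intro i; fin_cases i <;> simp [*]

theorem triangle_edges_eq (hg : GirthGe5 E) {e₁ e₂ e₃ : Finset V} (he₁ : e₁ ∈ E) (he₂ : e₂ ∈ E)
    (he₃ : e₃ ∈ E) {x y z : V} (hxy : x ≠ y) (hyz : y ≠ z) (hzx : z ≠ x)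
    (hx₁ : x ∈ e₁) (hy₁ : y ∈ e₁) (hy₂ : y ∈ e₂) (hz₂ : z ∈ e₂) (hz₃ : z ∈ e₃) (hx₃ : x ∈ e₃) :
    e₁ = e₂ ∧ e₂ = e₃ := by
  by_cases h₁₂ : e₁ = e₂
  · subst h₁₂
    exact ⟨rfl, hg.eq_of_mem_of_mem_s8 he₁ he₃ hzx hz₂ hx₁ hz₃ hx₃⟩
  by_cases h₂₃ : e₂ = e₃
  · subst h₂₃
    exact ⟨hg.eq_of_mem_of_mem_s8 he₁ he₂ hxy hx₁ hy₁ hx₃ hy₂, rfl⟩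
  by_cases h₃₁ : e₃ = e₁
  · subst h₃₁
    exact absurd (hg.eq_of_mem_of_mem_s8 he₂ he₃ hyz hy₂ hz₂ hy₁ hz₃) h₂₃
  exfalso
  refine hg.not_isCycle_fin (n := 2) (by norm_num) (by norm_num) ![x, y, z] ![e₁, e₂, e₃]
    ?_ ?_ ?_ ?_
  · intro i j; fin_cases i <;> fin_cases j <;> simp [*, Ne.symm]
  · intro i j; fin_cases i <;> fin_cases j <;> simp [*, Ne.symm]
  · intro i; fin_cases i <;> simp [*]
  · intro i; fin_cases i <;> simp [*]

theorem quadrilateral_edges_eq (hg : GirthGe5 E) {e₁ e₂ e₃ e₄ : Finset V} (he₁ : e₁ ∈ E)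
    (he₂ : e₂ ∈ E) (he₃ : e₃ ∈ E) (he₄ : e₄ ∈ E) {w x y z : V} (hwx : w ≠ x) (hwy : w ≠ y)
    (hwz : w ≠ z) (hxy : x ≠ y) (hxz : x ≠ z) (hyz : y ≠ z)
    (hw₁ : w ∈ e₁) (hx₁ : x ∈ e₁) (hx₂ : x ∈ e₂) (hy₂ : y ∈ e₂) (hy₃ : y ∈ e₃) (hz₃ : z ∈ e₃)
    (hz₄ : z ∈ e₄) (hw₄ : w ∈ e₄) :
    e₁ = e₂ ∧ e₂ = e₃ ∧ e₃ = e₄ := by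
  by_cases h₁₂ : e₁ = e₂
  · subst h₁₂
    obtain ⟨h₁₃, h₃₄⟩ := hg.triangle_edges_eq he₁ he₃ he₄ hwy hyz hwz.symm hw₁ hy₂ hy₃ hz₃ hz₄ hw₄
    exact ⟨rfl, h₁₃, h₃₄⟩
  exfalso
  by_cases h₂₃ : e₂ = e₃
  · subst h₂₃
    exact h₁₂ (hg.triangle_edges_eq he₁ he₂ he₄ hwx hxz hwz.symm hw₁ hx₁ hx₂ hz₃ hz₄ hw₄).1
  by_cases h₃₄ : e₃ = e₄
  · subst h₃₄
    exact h₁₂ (hg.triangle_edges_eq he₁ he₂ he₃ hwx hxy hwy.symm hw₁ hx₁ hx₂ hy₂ hy₃ hw₄).1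
  by_cases h₄₁ : e₄ = e₁
  · subst h₄₁
    exact h₂₃ (hg.triangle_edges_eq he₂ he₃ he₄ hxy hyz hxz.symm hx₂ hy₂ hy₃ hz₃ hz₄ hx₁).1
  by_cases h₁₃ : e₁ = e₃
  · subst h₁₃
    exact h₁₂ (hg.eq_of_mem_of_mem_s8 he₁ he₂ hxy hx₁ hy₃ hx₂ hy₂)
  by_cases h₂₄ : e₂ = e₄
  · subst h₂₄
    exact h₁₂ (hg.eq_of_mem_of_mem_s8 he₁ he₂ hwx hw₁ hx₁ hw₄ hx₂)
  refine hg.not_isCycle_fin (n := 3) (by norm_num) (by norm_num) ![w, x, y, z] ![e₁, e₂, e₃, e₄]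
    ?_ ?_ ?_ ?_
  · intro i j; fin_cases i <;> fin_cases j <;> simp [*, Ne.symm]
  · intro i j; fin_cases i <;> fin_cases j <;> simp [*, Ne.symm]
  · intro i; fin_cases i <;> simp [*]
  · intro i; fin_cases i <;> simp [*]

end GirthGe5

section Transversal

variable {V : Type*} [DecidableEq V] {E : Finset (Finset V)} {B : Finset V}
  {c : Finset V → V}

theorem image_filter_mem_subset (hc : ∀ f, (f ∩ B).Nonempty → c f ∈ f ∩ B) {x : V}
    (hx : ∀ h ∈ E, x ∈ h → (h ∩ B).Nonempty) : (E.filter (x ∈ ·)).image c ⊆ B := by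
  intro b hb
  obtain ⟨f, hf, rfl⟩ := Finset.mem_image.1 hb
  have hf := Finset.mem_filter.1 hf
  exact (Finset.mem_inter.1 (hc f (hx f hf.1 hf.2))).2

theorem card_image_filter_mem (hg : GirthGe5 E) (hc : ∀ f, (f ∩ B).Nonempty → c f ∈ f ∩ B)
    {x : V} (hxB : x ∉ B) (hx : ∀ h ∈ E, x ∈ h → (h ∩ B).Nonempty) :
    ((E.filter (x ∈ ·)).image c).card = hdeg E x := by
  refine Finset.card_image_of_injOn fun f hf g hg' hfg => ?_
  simp only [Finset.mem_coe, Finset.mem_filter] at hf hg'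
  have hcf := Finset.mem_inter.1 (hc f (hx f hf.1 hf.2))
  have hcg := Finset.mem_inter.1 (hc g (hx g hg'.1 hg'.2))
  exact hg.eq_of_mem_of_mem_s8 hf.1 hg'.1 (ne_of_mem_of_not_mem hcf.2 hxB).symm
    hf.2 hcf.1 hg'.2 (hfg ▸ hcg.1)

theorem card_inter_image_filter_mem_le_one (hg : GirthGe5 E)
    (hc : ∀ f, (f ∩ B).Nonempty → c f ∈ f ∩ B) {v w : V} (hvw : v ≠ w) (hvB : v ∉ B)
    (hwB : w ∉ B) (hv : ∀ h ∈ E, v ∈ h → (h ∩ B).Nonempty)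
    (hw : ∀ h ∈ E, w ∈ h → (h ∩ B).Nonempty) :
    ((E.filter (v ∈ ·)).image c ∩ (E.filter (w ∈ ·)).image c).card ≤ 1 := by
  refine Finset.card_le_one.2 fun b₁ hb₁ b₂ hb₂ => ?_
  by_contra hb
  simp only [Finset.mem_inter, Finset.mem_image, Finset.mem_filter] at hb₁ hb₂
  obtain ⟨⟨f₁, ⟨hf₁, hvf₁⟩, rfl⟩, ⟨g₁, ⟨hg₁, hwg₁⟩, hcg₁⟩⟩ := hb₁
  obtain ⟨⟨f₂, ⟨hf₂, hvf₂⟩, rfl⟩, ⟨g₂, ⟨hg₂, hwg₂⟩, hcg₂⟩⟩ := hb₂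
  have hcf₁ := Finset.mem_inter.1 (hc f₁ (hv f₁ hf₁ hvf₁))
  have hcf₂ := Finset.mem_inter.1 (hc f₂ (hv f₂ hf₂ hvf₂))
  have hcg₁' := hcg₁ ▸ Finset.mem_inter.1 (hc g₁ (hw g₁ hg₁ hwg₁))
  have hcg₂' := hcg₂ ▸ Finset.mem_inter.1 (hc g₂ (hw g₂ hg₂ hwg₂))
  obtain ⟨rfl, rfl, rfl⟩ := hg.quadrilateral_edges_eq hf₁ hg₁ hg₂ hf₂
    (ne_of_mem_of_not_mem hcf₁.2 hvB).symm hvw (ne_of_mem_of_not_mem hcf₂.2 hvB).symm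
    (ne_of_mem_of_not_mem hcf₁.2 hwB) hb (ne_of_mem_of_not_mem hcf₂.2 hwB).symm
    hvf₁ hcf₁.1 hcg₁'.1 hwg₁ hwg₂ hcg₂'.1 hcf₂.1 hvf₂
  exact hb rfl

theorem hdeg_add_hdeg_le (hg : GirthGe5 E) {v w : V} (hvw : v ≠ w) (hvB : v ∉ B)
    (hwB : w ∉ B) (hv : ∀ h ∈ E, v ∈ h → (h ∩ B).Nonempty)
    (hw : ∀ h ∈ E, w ∈ h → (h ∩ B).Nonempty) :
    hdeg E v + hdeg E w ≤ B.card + 1 := by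
  have : Nonempty V := ⟨v⟩
  choose! c hc using fun f : Finset V => (id : (f ∩ B).Nonempty → ∃ b, b ∈ f ∩ B)
  have hunion := Finset.card_le_card
    (Finset.union_subset (image_filter_mem_subset hc hv) (image_filter_mem_subset hc hw))
  have hinter := card_inter_image_filter_mem_le_one hg hc hvw hvB hwB hv hw
  rw [← card_image_filter_mem hg hc hvB hv, ← card_image_filter_mem hg hc hwB hw,
    ← Finset.card_union_add_card_inter]
  omega

end Transversal

theorem stmt_8_general {V : Type*} [DecidableEq V] (k' : ℕ)
    (E : Finset (Finset V))
    (hdeg : ∀ v : V, ((hdeg E v : ℚ)) ≥ (k' : ℚ) / 2 + 1)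
    (hgirth : GirthGe5 E)
    (B : Finset V) (hB : B.card = k') :
    ↑B ⊆ {v : V | ∀ h ∈ E, v ∈ h → (h ∩ B).Nonempty} ∧
      Set.ncard {v : V | ∀ h ∈ E, v ∈ h → (h ∩ B).Nonempty} ≤ k' + 1 := by
  set S := {v : V | ∀ h ∈ E, v ∈ h → (h ∩ B).Nonempty}
  have hdeg₂ (x : V) : k' + 2 ≤ 2 * _root_.hdeg E x := by
    have hx := hdeg x
    exact_mod_cast (by linarith : (k' : ℚ) + 2 ≤ 2 * _root_.hdeg E x)
  have hSB : (S \ ↑B).Subsingleton := by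
    rintro v ⟨hv, hvB⟩ w ⟨hw, hwB⟩
    by_contra hvw
    linarith [hdeg_add_hdeg_le hgirth hvw hvB hwB hv hw, hdeg₂ v, hdeg₂ w]
  refine ⟨fun v hv h _ hvh => ⟨v, Finset.mem_inter.2 ⟨hvh, hv⟩⟩, ?_⟩
  calc S.ncard ≤ (S \ ↑B).ncard + (↑B : Set V).ncard := Set.ncard_le_ncard_sdiff_add_ncard _ _
    _ ≤ k' + 1 := by
      rw [Set.ncard_coe_finset, hB]
      have := (Set.ncard_le_one hSB.finite).2 hSB
      omega

theorem stmt_8 {V : Type*} [DecidableEq V] (k k' : ℕ) (hk' : k' ≤ k)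
    (E : Finset (Finset V)) (hunif : ∀ h ∈ E, h.card = k)
    (hdeg : ∀ v : V, ((hdeg E v : ℚ)) ≥ (k' : ℚ) / 2 + 1)
    (hgirth : GirthGe5 E)
    (B : Finset V) (hB : B.card = k') :
    ↑B ⊆ {v : V | ∀ h ∈ E, v ∈ h → (h ∩ B).Nonempty} ∧
      Set.ncard {v : V | ∀ h ∈ E, v ∈ h → (h ∩ B).Nonempty} ≤ k' + 1 :=
  stmt_8_general k' E hdeg hgirth B hB
end

section
/- In a k-regular Moore graph G of diameter 2 with k ≥ 3, the metric dimension satisfies β(G) ≤ 2k − 3; explicitly, for any vertex u, any neighbor v of u, and any w ∈ N(v)\{u}, the set (N(u) ∪ N(v)) \ {u,v,w} is a resolving set of size 2k−3. -/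
open SimpleGraph

section MooreAux
variable {V : Type*} {G : SimpleGraph V}

lemma moore_tri {a b c : V}
    (h5 : 5 ≤ G.egirth) (hab : G.Adj a b) (hbc : G.Adj b c) (hca : G.Adj c a) : False := by
  set wk : G.Walk a a := .cons hab (.cons hbc (.cons hca .nil)) with hwk
  have hc : wk.IsCycle := by
    simp [hwk, Walk.isCycle_def, Walk.isTrail_def, hab.ne, hbc.ne, hca.ne,
      hab.ne', hbc.ne', hca.ne']
  have h2 := le_egirth.mp h5 a wk hc
  rw [hwk] at h2
  simp only [Walk.length_cons, Walk.length_nil] at h2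
  norm_num at h2

lemma moore_sq {x y a b : V}
    (h5 : 5 ≤ G.egirth) (hxy : x ≠ y) (hab : a ≠ b)
    (hax : G.Adj a x) (hay : G.Adj a y) (hbx : G.Adj b x) (hby : G.Adj b y) : False := by
  set wk : G.Walk x x := .cons hax.symm (.cons hay (.cons hby.symm (.cons hbx .nil))) with hwk
  have hc : wk.IsCycle := by
    simp [hwk, Walk.isCycle_def, Walk.isTrail_def, hax.ne, hay.ne, hbx.ne, hby.ne,
      hax.ne', hay.ne', hbx.ne', hby.ne', hxy, hab, hxy.symm, hab.symm, Sym2.eq_iff]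
  have h2 := le_egirth.mp h5 x wk hc
  rw [hwk] at h2
  simp only [Walk.length_cons, Walk.length_nil] at h2
  norm_num at h2

lemma moore_dist_one_iff {x y : V} (hr : G.Reachable x y) : G.dist x y = 1 ↔ G.Adj x y := by
  constructor
  · intro h
    obtain ⟨p, hp⟩ := hr.exists_walk_length_eq_dist
    rw [h] at hp
    cases p with
    | nil => simp at hp
    | cons h q =>
      cases q with
      | nil => exact h
      | cons h' q' => simp at hp
  · intro h
    refine le_antisymm ?_ (hr.pos_dist_of_ne h.ne)
    simpa using SimpleGraph.dist_le h.toWalk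

lemma moore_common_nbr {x y : V} (hr : G.Reachable x y) (hd : G.dist x y ≤ 2)
    (hne : x ≠ y) (hna : ¬ G.Adj x y) : ∃ a, G.Adj a x ∧ G.Adj a y := by
  have h1 : G.dist x y ≠ 1 := fun h => hna ((moore_dist_one_iff hr).mp h)
  have h0 : G.dist x y ≠ 0 := by simp [hr.dist_eq_zero_iff, hne]
  have h2 : G.dist x y = 2 := by omega
  obtain ⟨p, hp⟩ := hr.exists_walk_length_eq_dist
  rw [h2] at hp
  cases p with
  | nil => simp at hp
  | cons h q =>
    cases q with
    | nil => simp at hp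
    | cons h' q' =>
      cases q' with
      | nil => exact ⟨_, h.symm, h'⟩
      | cons h'' q'' => simp at hp

end MooreAux

theorem stmt_10 {V : Type*} [Fintype V] (G : SimpleGraph V) [DecidableRel G.Adj]
    (k : ℕ) (hk : 3 ≤ k) (hreg : G.IsRegularOfDegree k)
    (hgirth : G.girth = 5) (hdiam : G.diam = 2)
    (u v w : V) (huv : G.Adj u v) (hw : w ∈ G.neighborSet v) (hwu : w ≠ u) :
    IsResolvingSet G ((G.neighborSet u ∪ G.neighborSet v) \ {u, v, w}) ∧
      ((G.neighborSet u ∪ G.neighborSet v) \ {u, v, w}).ncard = 2 * k - 3 := by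
  classical
  -- basic consequences of the hypotheses
  have hnacyc : ¬ G.IsAcyclic := by
    intro h
    rw [h.girth_eq_zero] at hgirth
    omega
  have hegtop : G.egirth ≠ ⊤ := egirth_eq_top.not.mpr hnacyc
  have hegirth : 5 ≤ G.egirth := by
    have : G.egirth = ((G.girth : ℕ) : ℕ∞) := (ENat.coe_toNat hegtop).symm
    rw [this, hgirth]
    exact_mod_cast le_refl 5
  have hnet : G.ediam ≠ ⊤ := ediam_ne_top_of_diam_ne_zero (by omega)
  have hreach : ∀ x y : V, G.Reachable x y := fun x y =>
    reachable_of_edist_ne_top (ne_top_of_le_ne_top hnet edist_le_ediam)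
  have hd2 : ∀ x y : V, G.dist x y ≤ 2 := fun x y => hdiam ▸ dist_le_diam hnet
  have tri : ∀ a b c : V, G.Adj a b → G.Adj b c → G.Adj c a → False :=
    fun a b c h1 h2 h3 => moore_tri hegirth h1 h2 h3
  have uniq : ∀ {p q a b : V}, p ≠ q → G.Adj a p → G.Adj a q → G.Adj b p → G.Adj b q →
      a = b := by
    intro p q a b hpq h1 h2 h3 h4
    by_contra hab
    exact moore_sq hegirth hpq hab h1 h2 h3 h4
  have com : ∀ p q : V, p ≠ q → ¬ G.Adj p q → ∃ a, G.Adj a p ∧ G.Adj a q :=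
    fun p q h1 h2 => moore_common_nbr (hreach p q) (hd2 p q) h1 h2
  have hvw : G.Adj v w := hw
  have hnuw : ¬ G.Adj u w := fun h => tri u v w huv hvw h.symm
  -- membership in the candidate resolving set
  have hS : ∀ s : V, s ∈ (G.neighborSet u ∪ G.neighborSet v) \ {u, v, w} ↔
      (G.Adj u s ∨ G.Adj v s) ∧ s ≠ u ∧ s ≠ v ∧ s ≠ w := by
    intro s
    simp only [Set.mem_diff, Set.mem_union, mem_neighborSet, Set.mem_insert_iff,
      Set.mem_singleton_iff, not_or]
  set S := (G.neighborSet u ∪ G.neighborSet v) \ {u, v, w} with hSdef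
  -- the distinguishing witnesses
  have H1 : ∃ s ∈ S, G.Adj s u ∧ ¬ G.Adj s v ∧ ¬ G.Adj s w := by
    have hcard : 1 < (G.neighborFinset u).card := by
      rw [card_neighborFinset_eq_degree, hreg u]; omega
    obtain ⟨s, hs, hsv⟩ := Finset.exists_mem_ne hcard v
    rw [mem_neighborFinset] at hs
    have hsw : s ≠ w := fun h => hnuw (h ▸ hs)
    refine ⟨s, (hS s).mpr ⟨Or.inl hs, hs.ne', hsv, hsw⟩, hs.symm, ?_, ?_⟩
    · exact fun h => tri u s v hs h huv.symm
    · exact fun h => hsv (uniq hwu.symm hs.symm h huv.symm hvw)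
  have H2 : ∀ x : V, ¬ G.Adj u x → ¬ G.Adj v x → x ≠ u →
      ∃ s ∈ S, G.Adj s u ∧ ¬ G.Adj s x := by
    intro x hux hvx hxu
    obtain ⟨a, hau, hax⟩ := com u x (Ne.symm hxu) hux
    have hcard : 0 < ((G.neighborFinset u) \ {v, a}).card := by
      have h1 : ({v, a} : Finset V).card ≤ 2 := Finset.card_insert_le _ _ |>.trans (by simp)
      have h2 := Finset.le_card_sdiff ({v, a} : Finset V) (G.neighborFinset u)
      rw [card_neighborFinset_eq_degree, hreg u] at h2
      omega
    obtain ⟨s, hsmem⟩ := Finset.card_pos.mp hcard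
    rw [Finset.mem_sdiff, mem_neighborFinset, Finset.mem_insert, Finset.mem_singleton,
      not_or] at hsmem
    obtain ⟨hs, hsv, hsa⟩ := hsmem
    have hsw : s ≠ w := fun h => hnuw (h ▸ hs)
    refine ⟨s, (hS s).mpr ⟨Or.inl hs, hs.ne', hsv, hsw⟩, hs.symm, ?_⟩
    intro hsx
    exact hsa (uniq (Ne.symm hxu) hs.symm hsx hau hax)
  have H3 : ∃ s ∈ S, G.Adj s v ∧ ¬ G.Adj s w := by
    have hcard : 0 < ((G.neighborFinset v) \ {u, w}).card := by
      have h1 : ({u, w} : Finset V).card ≤ 2 := Finset.card_insert_le _ _ |>.trans (by simp)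
      have h2 := Finset.le_card_sdiff ({u, w} : Finset V) (G.neighborFinset v)
      rw [card_neighborFinset_eq_degree, hreg v] at h2
      omega
    obtain ⟨s, hsmem⟩ := Finset.card_pos.mp hcard
    rw [Finset.mem_sdiff, mem_neighborFinset, Finset.mem_insert, Finset.mem_singleton,
      not_or] at hsmem
    obtain ⟨hs, hsu, hsw⟩ := hsmem
    refine ⟨s, (hS s).mpr ⟨Or.inr hs, hsu, hs.ne', hsw⟩, hs.symm, ?_⟩
    exact fun h => tri v s w hs h hvw.symm
  have H4 : ∀ x : V, ¬ G.Adj u x → ¬ G.Adj v x → x ≠ u →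
      ∃ s ∈ S, G.Adj s x ∧ ¬ G.Adj s v ∧ ¬ G.Adj s w := by
    intro x hux hvx hxu
    obtain ⟨a, hau, hax⟩ := com u x (Ne.symm hxu) hux
    have hav : a ≠ v := fun h => hvx (h ▸ hax)
    have haw : a ≠ w := fun h => hnuw (h ▸ hau).symm
    refine ⟨a, (hS a).mpr ⟨Or.inl hau.symm, hau.ne, hav, haw⟩, hax, ?_, ?_⟩
    · exact fun h => tri u a v hau.symm h huv.symm
    · exact fun h => hav (uniq hwu.symm hau h huv.symm hvw)
  constructor
  · -- resolving set
    intro x y hxy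
    by_contra hne
    have hxS : x ∉ S := by
      intro hx
      have h := hxy x hx
      rw [SimpleGraph.dist_self] at h
      exact hne (((hreach x y).dist_eq_zero_iff).mp h.symm)
    have hyS : y ∉ S := by
      intro hy
      have h := hxy y hy
      rw [SimpleGraph.dist_self] at h
      exact hne (((hreach y x).dist_eq_zero_iff).mp h).symm
    have key : ∀ s ∈ S, (G.Adj s x ↔ G.Adj s y) := by
      intro s hs
      rw [← moore_dist_one_iff (hreach s x), ← moore_dist_one_iff (hreach s y), hxy s hs]
    have hclass : ∀ z : V, z ∉ S → z = u ∨ z = v ∨ z = w ∨ (¬ G.Adj u z ∧ ¬ G.Adj v z) := by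
      intro z hz
      rw [hS] at hz
      push_neg at hz
      by_cases h1 : G.Adj u z <;> by_cases h2 : G.Adj v z <;> tauto
    -- membership of D-type vertices excludes u, v, w
    have hD : ∀ z : V, ¬ G.Adj u z → ¬ G.Adj v z → z ≠ u ∧ z ≠ v ∧ z ≠ w := by
      intro z h1 h2
      refine ⟨fun h => h2 (h ▸ huv.symm), fun h => h1 (h ▸ huv), fun h => h2 (h ▸ hvw)⟩
    -- the hard case : both x and y of D-type
    have H5 : ∀ x y : V, x ≠ y → (∀ s ∈ S, (G.Adj s x ↔ G.Adj s y)) →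
        ¬ G.Adj u x → ¬ G.Adj v x → ¬ G.Adj u y → ¬ G.Adj v y → False := by
      intro x y hxy key hux hvx huy hvy
      obtain ⟨hxu, hxv, hxw⟩ := hD x hux hvx
      obtain ⟨hyu, hyv, hyw⟩ := hD y huy hvy
      obtain ⟨a, hau, hax⟩ := com u x (Ne.symm hxu) hux
      have hav : a ≠ v := fun h => hvx (h ▸ hax)
      have haw : a ≠ w := fun h => hnuw (h ▸ hau).symm
      have haS : a ∈ S := (hS a).mpr ⟨Or.inl hau.symm, hau.ne, hav, haw⟩
      have hay : G.Adj a y := (key a haS).mp hax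
      have hnxy : ¬ G.Adj x y := fun h => tri a x y hax h hay.symm
      -- common neighbors of v with x and with y must both be w
      have hcw : ∀ z : V, z ≠ u → z ≠ v → ¬ G.Adj u z → ¬ G.Adj v z →
          ∀ c, G.Adj c v → G.Adj c z → (∀ s ∈ S, (G.Adj s z ↔ G.Adj s x)) → c ≠ w →
          False := by
        intro z hzu hzv huz hvz c hcv hcz keyz hcwne
        have hcu : c ≠ u := fun h => huz (h ▸ hcz)
        have hcS : c ∈ S := (hS c).mpr ⟨Or.inr hcv.symm, hcu, hcv.ne, hcwne⟩
        have hcx : G.Adj c x := (keyz c hcS).mp hcz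
        have hczy : G.Adj c y := (key c hcS).mp hcx
        have hca : c = a := uniq hxy hcx hczy hax hay
        exact tri u a v hau.symm (hca ▸ hcv) huv.symm
      obtain ⟨c, hcv, hcx⟩ := com v x (Ne.symm hxv) hvx
      obtain ⟨d, hdv, hdy⟩ := com v y (Ne.symm hyv) hvy
      have hcweq : c = w := by
        by_contra hcwne
        exact hcw x hxu hxv hux hvx c hcv hcx (fun s hs => Iff.rfl) hcwne
      have hdweq : d = w := by
        by_contra hdwne
        exact hcw y hyu hyv huy hvy d hdv hdy (fun s hs => (key s hs).symm) hdwne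
      have hwx : G.Adj w x := hcweq ▸ hcx
      have hwy : G.Adj w y := hdweq ▸ hdy
      exact haw (uniq hxy hax hay hwx hwy)
    rcases hclass x hxS with hx | hx | hx | hx <;> rcases hclass y hyS with hy | hy | hy | hy
    · exact hne (hx.trans hy.symm)
    · obtain ⟨s, hs, h1, h2, _⟩ := H1
      exact h2 (hy ▸ (key s hs).mp (hx ▸ h1))
    · obtain ⟨s, hs, h1, _, h3⟩ := H1
      exact h3 (hy ▸ (key s hs).mp (hx ▸ h1))
    · have hyu : y ≠ u := fun h => hne (hx.trans h.symm)
      obtain ⟨s, hs, h1, h2⟩ := H2 y hy.1 hy.2 hyu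
      exact h2 ((key s hs).mp (hx ▸ h1))
    · obtain ⟨s, hs, h1, h2, _⟩ := H1
      exact h2 (hx ▸ (key s hs).mpr (hy ▸ h1))
    · exact hne (hx.trans hy.symm)
    · obtain ⟨s, hs, h1, h2⟩ := H3
      exact h2 (hy ▸ (key s hs).mp (hx ▸ h1))
    · have hyu : y ≠ u := fun h => hy.2 (h ▸ huv.symm)
      obtain ⟨s, hs, h1, h2, _⟩ := H4 y hy.1 hy.2 hyu
      exact h2 (hx ▸ (key s hs).mpr h1)
    · obtain ⟨s, hs, h1, _, h3⟩ := H1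
      exact h3 (hx ▸ (key s hs).mpr (hy ▸ h1))
    · obtain ⟨s, hs, h1, h2⟩ := H3
      exact h2 (hx ▸ (key s hs).mpr (hy ▸ h1))
    · exact hne (hx.trans hy.symm)
    · have hyu : y ≠ u := fun h => hy.2 (h ▸ huv.symm)
      obtain ⟨s, hs, h1, _, h3⟩ := H4 y hy.1 hy.2 hyu
      exact h3 (hx ▸ (key s hs).mpr h1)
    · have hxu : x ≠ u := fun h => hx.2 (h ▸ huv.symm)
      obtain ⟨s, hs, h1, h2⟩ := H2 x hx.1 hx.2 hxu
      exact h2 ((key s hs).mpr (hy ▸ h1))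
    · have hxu : x ≠ u := fun h => hx.2 (h ▸ huv.symm)
      obtain ⟨s, hs, h1, h2, _⟩ := H4 x hx.1 hx.2 hxu
      exact h2 (hy ▸ (key s hs).mp h1)
    · have hxu : x ≠ u := fun h => hx.2 (h ▸ huv.symm)
      obtain ⟨s, hs, h1, _, h3⟩ := H4 x hx.1 hx.2 hxu
      exact h3 (hy ▸ (key s hs).mp h1)
    · exact H5 x y hne key hx.1 hx.2 hy.1 hy.2
  · -- cardinality
    have hcoe : S = ↑(((G.neighborFinset u ∪ G.neighborFinset v)) \ {u, v, w}) := by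
      ext z
      rw [hS]
      simp only [Finset.coe_sdiff, Set.mem_diff, Finset.coe_union, Set.mem_union,
        Finset.coe_insert, Finset.mem_coe, mem_neighborFinset, Set.mem_insert_iff,
        Finset.coe_singleton, Set.mem_singleton_iff, not_or]
    rw [hcoe, Set.ncard_coe_finset]
    have hdisj : Disjoint (G.neighborFinset u) (G.neighborFinset v) := by
      rw [Finset.disjoint_left]
      intro z hz1 hz2
      rw [mem_neighborFinset] at hz1 hz2
      exact tri u z v hz1 hz2.symm huv.symm
    have hsub : ({u, v, w} : Finset V) ⊆ G.neighborFinset u ∪ G.neighborFinset v := by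
      intro z hz
      simp only [Finset.mem_insert, Finset.mem_singleton] at hz
      rcases hz with rfl | rfl | rfl
      · exact Finset.mem_union_right _ ((mem_neighborFinset _ _ _).mpr huv.symm)
      · exact Finset.mem_union_left _ ((mem_neighborFinset _ _ _).mpr huv)
      · exact Finset.mem_union_right _ ((mem_neighborFinset _ _ _).mpr hvw)
    rw [Finset.card_sdiff_of_subset hsub, Finset.card_union_of_disjoint hdisj,
      card_neighborFinset_eq_degree, card_neighborFinset_eq_degree, hreg u, hreg v]
    have hcard3 : ({u, v, w} : Finset V).card = 3 := by
      rw [Finset.card_insert_of_notMem, Finset.card_insert_of_notMem, Finset.card_singleton]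
      · simp [hvw.ne]
      · simp [huv.ne, hwu.symm, (Ne.symm hwu)]
    rw [hcard3]
    omega
end

section
/- The metric dimension of the Petersen graph is exactly 3. -/
namespace Pet

abbrev V := {s : Finset (Fin 5) // s.card = 2}

instance : DecidableRel (Kneser 2 5).Adj := fun u v =>
  decidable_of_iff (u ≠ v ∧ (Disjoint u.1 v.1 ∨ Disjoint v.1 u.1)) Iff.rfl

/-- Closed form for distances in the Petersen graph (diameter 2). -/
def d (u v : V) : ℕ := if u = v then 0 else if (Kneser 2 5).Adj u v then 1 else 2

lemma common : ∀ u v : V, u ≠ v → ¬ (Kneser 2 5).Adj u v →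
    ∃ w : V, (Kneser 2 5).Adj u w ∧ (Kneser 2 5).Adj w v := by decide

lemma no_pair : ∀ a b : Pet.V, ∃ u v : Pet.V, u ≠ v ∧
    ∀ s ∈ ({a, b} : Finset Pet.V), Pet.d s u = Pet.d s v := by decide

lemma dist_eq (u v : V) : (Kneser 2 5).dist u v = d u v := by
  unfold d
  by_cases h : u = v
  · simp [h]
  · simp only [if_neg h]
    by_cases ha : (Kneser 2 5).Adj u v
    · simp [if_pos ha, SimpleGraph.dist_eq_one_iff_adj.mpr ha]
    · simp only [if_neg ha]
      obtain ⟨w, h1, h2⟩ := common u v h ha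
      have hle : (Kneser 2 5).dist u v ≤ 2 := by
        have := SimpleGraph.dist_le (SimpleGraph.Walk.cons h1 h2.toWalk)
        simpa using this
      have h0 : (Kneser 2 5).dist u v ≠ 0 := by
        intro hc
        rcases SimpleGraph.dist_eq_zero_iff_eq_or_not_reachable.mp hc with he | hr
        · exact h he
        · exact hr ⟨SimpleGraph.Walk.cons h1 h2.toWalk⟩
      have h1' : (Kneser 2 5).dist u v ≠ 1 := fun hc =>
        ha (SimpleGraph.dist_eq_one_iff_adj.mp hc)
      omega

end Pet

theorem stmt_11 :
    (∃ S : Finset {s : Finset (Fin 5) // s.card = 2},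
        IsResolvingSet (Kneser 2 5) ↑S ∧ S.card = 3) ∧
    (∀ S : Finset {s : Finset (Fin 5) // s.card = 2},
        IsResolvingSet (Kneser 2 5) ↑S → 3 ≤ S.card) := by
  have key : ∀ (S : Finset Pet.V),
      IsResolvingSet (Kneser 2 5) ↑S ↔
      ∀ u v : Pet.V, (∀ s ∈ S, Pet.d s u = Pet.d s v) → u = v := by
    intro S
    unfold IsResolvingSet
    simp only [Pet.dist_eq, Finset.mem_coe]
  constructor
  · refine ⟨{⟨{0,1}, rfl⟩, ⟨{0,2}, rfl⟩, ⟨{0,3}, rfl⟩}, ?_, by decide⟩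
    rw [key]
    decide
  · intro S hS
    by_contra hlt
    push_neg at hlt
    rw [key] at hS
    have h2 : S.card ≤ 2 := by omega
    have : ∃ a b : Pet.V, S ⊆ {a, b} := by
      interval_cases h : S.card
      · exact ⟨⟨{0,1}, rfl⟩, ⟨{0,1}, rfl⟩, by simp [Finset.card_eq_zero.mp h]⟩
      · obtain ⟨a, ha⟩ := Finset.card_eq_one.mp h
        exact ⟨a, a, by simp [ha]⟩
      · obtain ⟨a, b, _, hab⟩ := Finset.card_eq_two.mp h
        exact ⟨a, b, by simp [hab]⟩
    obtain ⟨a, b, hsub⟩ := this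
    obtain ⟨u, v, huv, hd⟩ := Pet.no_pair a b
    exact huv (hS u v (fun s hs => hd s (hsub hs)))
end

section
/- Let G be a graph on q²+q+1 vertices with diameter 2 and no 4-cycle, in which every vertex has degree q or q+1 (a polarity graph). Then the metric dimension of G satisfies β(G) ≥ 2q − 5. -/
/-- `G` contains no 4-cycle. -/
def C4Free {V : Type*} (G : SimpleGraph V) : Prop :=
  ∀ a b c d : V, a ≠ c → b ≠ d →
    ¬(G.Adj a b ∧ G.Adj b c ∧ G.Adj c d ∧ G.Adj d a)

/-!
In a graph of diameter two, a vertex outside a resolving set `S` is at distance `1` or `2` from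
each vertex of `S`, so it is determined by its set of neighbours in `S`. These sets are distinct,
so at most one is empty and at most `|S|` are singletons, while the sum of their sizes is at most
`Δ |S|`, `Δ` the maximum degree. Hence `2 (n - |S|) ≤ 2 + |S| + Δ |S|`. With `n = q² + q + 1`
and `Δ = q + 1` this reads `2q² + 2q ≤ (q + 4) |S|`, which forces `|S| > 2q - 6`.
-/

open Finset

namespace Finset

variable {α β : Type*} {T : Finset α} {S : Finset β} {f : α → Finset β}

theorem card_filter_card_eq_le_choose (hf : Set.InjOn f T) (hfS : ∀ v ∈ T, f v ⊆ S) (k : ℕ) :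
    #{v ∈ T | #(f v) = k} ≤ (#S).choose k := by
  rw [← card_powersetCard]
  refine card_le_card_of_injOn f (fun v hv => ?_) (hf.mono (coe_subset.2 (filter_subset _ _)))
  obtain ⟨hvT, hvk⟩ := mem_filter.1 hv
  exact mem_powersetCard.2 ⟨hfS v hvT, hvk⟩

theorem two_mul_card_le_of_injOn (hf : Set.InjOn f T) (hfS : ∀ v ∈ T, f v ⊆ S) :
    2 * #T ≤ 2 + #S + ∑ v ∈ T, #(f v) := by
  have hpointwise : ∀ v ∈ T,
      2 ≤ #(f v) + (if #(f v) = 0 then 2 else 0) + (if #(f v) = 1 then 1 else 0) := by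
    intro v _; split_ifs <;> omega
  have hempty := card_filter_card_eq_le_choose hf hfS 0
  have hsingle := card_filter_card_eq_le_choose hf hfS 1
  rw [Nat.choose_zero_right] at hempty
  rw [Nat.choose_one_right] at hsingle
  calc 2 * #T = ∑ v ∈ T, 2 := by rw [sum_const, smul_eq_mul, mul_comm]
    _ ≤ ∑ v ∈ T, (#(f v) + (if #(f v) = 0 then 2 else 0) + (if #(f v) = 1 then 1 else 0)) :=
      sum_le_sum hpointwise
    _ = ∑ v ∈ T, #(f v) + 2 * #{v ∈ T | #(f v) = 0} + #{v ∈ T | #(f v) = 1} := by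
      rw [sum_add_distrib, sum_add_distrib, sum_ite, sum_ite, sum_const_zero, sum_const_zero,
        sum_const, sum_const, smul_eq_mul, smul_eq_mul, mul_one, mul_comm]; simp
    _ ≤ 2 + #S + ∑ v ∈ T, #(f v) := by omega

end Finset

namespace SimpleGraph

variable {V : Type*} {G : SimpleGraph V}

theorem ediam_le_two_of_diam_eq_two (h : G.diam = 2) : G.ediam ≤ 2 := by
  rw [← ENat.natCast_toNat (ediam_ne_top_of_diam_ne_zero (by omega)), ← diam, h]
  rfl

theorem dist_eq_two_of_ediam_le_two (h : G.ediam ≤ 2) {u v : V} (huv : u ≠ v)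
    (hadj : ¬G.Adj u v) : G.dist u v = 2 := by
  have hle : G.edist u v ≤ 2 := edist_le_ediam.trans h
  have hreach : G.Reachable u v := reachable_of_edist_ne_top (ne_top_of_le_ne_top (by simp) hle)
  have hlt := hreach.one_lt_dist_of_ne_of_not_adj huv hadj
  have : G.dist u v ≤ 2 := by
    rw [← ENat.natCast_le_natCast, hreach.coe_dist_eq_edist]; exact hle
  omega

variable [Fintype V] [DecidableRel G.Adj]

theorem sum_card_bipartiteBelow_le_sum_degree (S T : Finset V) :
    ∑ v ∈ T, #(S.bipartiteBelow G.Adj v) ≤ ∑ s ∈ S, G.degree s := by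
  rw [← sum_card_bipartiteAbove_eq_sum_card_bipartiteBelow]
  refine sum_le_sum fun s _ => ?_
  rw [← card_neighborFinset_eq_degree]
  exact card_le_card fun v hv => by simpa using (mem_bipartiteAbove G.Adj).1 hv |>.2

end SimpleGraph

namespace IsResolvingSet

open SimpleGraph

variable {V : Type*} [Fintype V] [DecidableEq V] {G : SimpleGraph V} [DecidableRel G.Adj]
  {S : Finset V}

theorem injOn_bipartiteBelow (h : G.ediam ≤ 2) (hS : IsResolvingSet G ↑S) :
    Set.InjOn (fun v => S.bipartiteBelow G.Adj v) ↑(Sᶜ) := by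
  intro u hu v hv huv
  refine hS u v fun s hs => ?_
  have hadj : G.Adj s u ↔ G.Adj s v := by
    simpa [mem_coe.1 hs] using congrArg (s ∈ ·) huv
  by_cases hsu : G.Adj s u
  · rw [dist_eq_one_iff_adj.2 hsu, dist_eq_one_iff_adj.2 (hadj.1 hsu)]
  · rw [dist_eq_two_of_ediam_le_two h (ne_of_mem_of_not_mem hs (by simpa using hu)) hsu,
      dist_eq_two_of_ediam_le_two h (ne_of_mem_of_not_mem hs (by simpa using hv)) (hadj.not.1 hsu)]

theorem two_mul_card_le (h : G.ediam ≤ 2) (hS : IsResolvingSet G ↑S) :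
    2 * Fintype.card V ≤ 2 + (G.maxDegree + 3) * #S := by
  have hcount := two_mul_card_le_of_injOn (hS.injOn_bipartiteBelow h) (T := Sᶜ)
    fun _ _ => filter_subset _ _
  have hedges : ∑ v ∈ Sᶜ, #(S.bipartiteBelow G.Adj v) ≤ G.maxDegree * #S :=
    calc _ ≤ ∑ s ∈ S, G.degree s := sum_card_bipartiteBelow_le_sum_degree S Sᶜ
      _ ≤ ∑ s ∈ S, G.maxDegree := sum_le_sum fun s _ => G.degree_le_maxDegree s
      _ = G.maxDegree * #S := by rw [sum_const, smul_eq_mul, mul_comm]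
  have hcompl := card_compl_add_card S
  nlinarith

end IsResolvingSet

theorem stmt_14_general {V : Type*} [Fintype V] (G : SimpleGraph V) [DecidableRel G.Adj]
    (q : ℕ) (hcard : Fintype.card V = q ^ 2 + q + 1)
    (hdiam : G.diam = 2)
    (hdeg : ∀ v : V, G.degree v = q ∨ G.degree v = q + 1)
    (S : Finset V) (hres : IsResolvingSet G ↑S) :
    2 * q - 5 ≤ S.card := by
  classical
  have hcount := hres.two_mul_card_le (SimpleGraph.ediam_le_two_of_diam_eq_two hdiam)
  have hmaxDegree : G.maxDegree ≤ q + 1 :=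
    G.maxDegree_le_of_forall_degree_le _ fun v => by rcases hdeg v with h | h <;> omega
  have hS : 2 * q ^ 2 + 2 * q + 2 ≤ 2 + (q + 4) * #S :=
    calc 2 * q ^ 2 + 2 * q + 2 = 2 * Fintype.card V := by rw [hcard]; ring
      _ ≤ 2 + (G.maxDegree + 3) * #S := hcount
      _ ≤ 2 + (q + 4) * #S := by gcongr 2 + ?_ * _; omega
  by_contra! hsmall
  have hS' : #S + 6 ≤ 2 * q := by omega
  nlinarith

theorem stmt_14 {V : Type*} [Fintype V] (G : SimpleGraph V) [DecidableRel G.Adj]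
    (q : ℕ) (hcard : Fintype.card V = q ^ 2 + q + 1)
    (hdiam : G.diam = 2) (hc4 : C4Free G)
    (hdeg : ∀ v : V, G.degree v = q ∨ G.degree v = q + 1)
    (S : Finset V) (hres : IsResolvingSet G ↑S) :
    2 * q - 5 ≤ S.card :=
  stmt_14_general G q hcard hdiam hdeg S hres
end

section
/- Let G be a C₄-free graph of diameter 2 on q²+q+1 vertices with every vertex of degree q or q+1, and suppose u is a vertex of degree q. Then u lies on no triangle, every neighbor of u has degree q+1, and for every vertex w at distance 2 from u there is exactly one common neighbor of u and w. -/
theorem stmt_15 {V : Type*} [Fintype V] (G : SimpleGraph V) [DecidableRel G.Adj]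
    (q : ℕ) (hq : 2 ≤ q) (hcard : Fintype.card V = q ^ 2 + q + 1)
    (hdiam : G.diam = 2) (hc4 : C4Free G)
    (hdeg : ∀ v : V, G.degree v = q ∨ G.degree v = q + 1)
    (u : V) (hu : G.degree u = q) :
    (¬∃ a b : V, G.Adj u a ∧ G.Adj a b ∧ G.Adj b u) ∧
    (∀ v : V, G.Adj u v → G.degree v = q + 1) ∧
    (∀ w : V, G.dist u w = 2 → ∃! c : V, G.Adj u c ∧ G.Adj c w) := by
  classical
  have hne : G.ediam ≠ ⊤ :=
    SimpleGraph.ediam_ne_top_of_diam_ne_zero (by rw [hdiam]; exact two_ne_zero)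
  have hreach : ∀ w : V, G.Reachable u w := fun w =>
    SimpleGraph.reachable_of_edist_ne_top
      (ne_top_of_le_ne_top hne SimpleGraph.edist_le_ediam)
  have hdist2 : ∀ w : V, G.dist u w ≤ 2 := fun w => hdiam ▸ SimpleGraph.dist_le_diam hne
  -- uniqueness of common neighbors
  have uniq : ∀ w c c' : V, w ≠ u → G.Adj u c → G.Adj c w → G.Adj u c' → G.Adj c' w →
      c = c' := by
    intro w c c' hw hc hcw hc' hc'w
    by_contra hcc
    exact hc4 u c w c' (Ne.symm hw) hcc ⟨hc, hcw, hc'w.symm, hc'.symm⟩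
  -- existence of common neighbor
  have hex : ∀ w : V, w ≠ u → ¬ G.Adj u w → ∃ c, G.Adj u c ∧ G.Adj c w := by
    intro w hw hadj
    have h2 : G.dist u w = 2 := by
      have h0 : G.dist u w ≠ 0 :=
        SimpleGraph.dist_ne_zero_iff_ne_and_reachable.mpr ⟨Ne.symm hw, hreach w⟩
      have h1 : G.dist u w ≠ 1 := fun h => hadj (SimpleGraph.dist_eq_one_iff_adj.mp h)
      have := hdist2 w
      omega
    obtain ⟨p, hp⟩ := (hreach w).exists_walk_length_eq_dist
    rw [h2] at hp
    cases p with
    | nil => simp at hp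
    | cons h p' =>
      exact ⟨_, h, p'.adj_of_length_eq_one (by simpa using hp)⟩
  set N := G.neighborFinset u with hN
  have hNcard : N.card = q := by rw [hN, SimpleGraph.card_neighborFinset_eq_degree, hu]
  have huN : u ∉ N := by simp [hN]
  set W : Finset V := Finset.univ \ insert u N with hWdef
  have hWcard : W.card = q ^ 2 := by
    rw [hWdef, Finset.card_sdiff_of_subset (Finset.subset_univ _), Finset.card_insert_of_notMem huN,
      hNcard, Finset.card_univ, hcard]
    omega
  have hWmem : ∀ w : V, w ∈ W ↔ w ≠ u ∧ ¬ G.Adj u w := by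
    intro w
    simp [hWdef, hN, SimpleGraph.mem_neighborFinset, not_or]
  set out : V → Finset V := fun v => G.neighborFinset v ∩ W with hout
  -- W is partitioned by the out sets
  have hcover : W = N.biUnion out := by
    apply Finset.Subset.antisymm
    · intro w hw
      obtain ⟨hw1, hw2⟩ := (hWmem w).mp hw
      obtain ⟨c, hc1, hc2⟩ := hex w hw1 hw2
      refine Finset.mem_biUnion.mpr ⟨c, ?_, ?_⟩
      · simpa [hN, SimpleGraph.mem_neighborFinset] using hc1
      · exact Finset.mem_inter.mpr ⟨by rw [SimpleGraph.mem_neighborFinset]; exact hc2, hw⟩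
    · intro w hw
      obtain ⟨c, _, hc⟩ := Finset.mem_biUnion.mp hw
      exact (Finset.mem_inter.mp hc).2
  have hdisj : ∀ v ∈ N, ∀ v' ∈ N, v ≠ v' → Disjoint (out v) (out v') := by
    intro v hv v' hv' hvv'
    rw [Finset.disjoint_left]
    intro w hw hw'
    have hvw : G.Adj v w := by
      have := (Finset.mem_inter.mp hw).1; rwa [SimpleGraph.mem_neighborFinset] at this
    have hv'w : G.Adj v' w := by
      have := (Finset.mem_inter.mp hw').1; rwa [SimpleGraph.mem_neighborFinset] at this
    have hwW := (Finset.mem_inter.mp hw).2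
    have hwu := ((hWmem w).mp hwW).1
    have huv : G.Adj u v := by rwa [hN, SimpleGraph.mem_neighborFinset] at hv
    have huv' : G.Adj u v' := by rwa [hN, SimpleGraph.mem_neighborFinset] at hv'
    exact hvv' (uniq w v v' hwu huv hvw huv' hv'w)
  have hsum : ∑ v ∈ N, (out v).card = q ^ 2 := by
    rw [← Finset.card_biUnion hdisj, ← hcover, hWcard]
  -- the key bound for each neighbor
  have hbound : ∀ v ∈ N, (out v).card + (G.neighborFinset v ∩ N).card + 1 ≤ q + 1 := by
    intro v hv
    have huv : G.Adj u v := by rwa [hN, SimpleGraph.mem_neighborFinset] at hv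
    have hsub : insert u ((G.neighborFinset v ∩ N) ∪ out v) ⊆ G.neighborFinset v := by
      intro x hx
      rcases Finset.mem_insert.mp hx with rfl | hx
      · rw [SimpleGraph.mem_neighborFinset]; exact huv.symm
      · rcases Finset.mem_union.mp hx with hx | hx
        · exact (Finset.mem_inter.mp hx).1
        · exact (Finset.mem_inter.mp hx).1
    have hd1 : u ∉ (G.neighborFinset v ∩ N) ∪ out v := by
      intro hx
      rcases Finset.mem_union.mp hx with hx | hx
      · exact huN (Finset.mem_inter.mp hx).2
      · have := ((hWmem u).mp (Finset.mem_inter.mp hx).2).1; exact this rfl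
    have hd2 : Disjoint (G.neighborFinset v ∩ N) (out v) := by
      rw [Finset.disjoint_left]
      intro x hx hx'
      have hxN := (Finset.mem_inter.mp hx).2
      have hxW := (Finset.mem_inter.mp hx').2
      have := ((hWmem x).mp hxW).2
      rw [hN, SimpleGraph.mem_neighborFinset] at hxN
      exact this hxN
    have hcardle := Finset.card_le_card hsub
    rw [Finset.card_insert_of_notMem hd1, Finset.card_union_of_disjoint hd2] at hcardle
    have hdegle : (G.neighborFinset v).card ≤ q + 1 := by
      rw [SimpleGraph.card_neighborFinset_eq_degree]
      rcases hdeg v with h | h <;> omega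
    omega
  have houtle : ∀ v ∈ N, (out v).card ≤ q := by
    intro v hv
    have := hbound v hv
    omega
  have hall : ∀ v ∈ N, (out v).card = q := by
    by_contra h
    push_neg at h
    obtain ⟨v0, hv0, hne0⟩ := h
    have hlt : ∑ v ∈ N, (out v).card < ∑ v ∈ N, q :=
      Finset.sum_lt_sum houtle ⟨v0, hv0, lt_of_le_of_ne (houtle v0 hv0) hne0⟩
    rw [hsum, Finset.sum_const, hNcard, smul_eq_mul] at hlt
    have : q ^ 2 = q * q := sq q
    omega
  have hempty : ∀ v ∈ N, (G.neighborFinset v ∩ N).card = 0 := by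
    intro v hv
    have h1 := hbound v hv
    have h2 := hall v hv
    omega
  refine ⟨?_, ?_, ?_⟩
  · rintro ⟨a, b, hua, hab, hbu⟩
    have haN : a ∈ N := by rw [hN, SimpleGraph.mem_neighborFinset]; exact hua
    have hbmem : b ∈ G.neighborFinset a ∩ N := by
      rw [Finset.mem_inter, SimpleGraph.mem_neighborFinset, hN,
        SimpleGraph.mem_neighborFinset]
      exact ⟨hab, hbu.symm⟩
    have := hempty a haN
    rw [Finset.card_eq_zero] at this
    rw [this] at hbmem
    exact absurd hbmem (Finset.notMem_empty b)
  · intro v huv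
    have hvN : v ∈ N := by rw [hN, SimpleGraph.mem_neighborFinset]; exact huv
    rcases hdeg v with h | h
    · exfalso
      have h1 := hbound v hvN
      have h2 := hall v hvN
      have h3 := hempty v hvN
      have hdegcard : (G.neighborFinset v).card = q := by
        rw [SimpleGraph.card_neighborFinset_eq_degree, h]
      have hsub : insert u (out v) ⊆ G.neighborFinset v := by
        intro x hx
        rcases Finset.mem_insert.mp hx with rfl | hx
        · rw [SimpleGraph.mem_neighborFinset]; exact huv.symm
        · exact (Finset.mem_inter.mp hx).1
      have hd1 : u ∉ out v := fun hx =>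
        ((hWmem u).mp (Finset.mem_inter.mp hx).2).1 rfl
      have := Finset.card_le_card hsub
      rw [Finset.card_insert_of_notMem hd1, h2, hdegcard] at this
      omega
    · exact h
  · intro w hw
    have hwu : w ≠ u := by
      intro h; subst h; rw [SimpleGraph.dist_self] at hw; omega
    have hnadj : ¬ G.Adj u w := by
      intro h
      rw [SimpleGraph.dist_eq_one_iff_adj.mpr h] at hw
      omega
    obtain ⟨c, hc1, hc2⟩ := hex w hwu hnadj
    exact ⟨c, ⟨hc1, hc2⟩, fun c' ⟨hc1', hc2'⟩ => uniq w c' c hwu hc1' hc2' hc1 hc2⟩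
end

section
/- Let G be a C₄-free graph of diameter 2 on q²+q+1 vertices with all degrees in {q, q+1}, let u be a vertex of degree q and v ∈ N(u). Then the set (N(u) ∪ N(v)) \ {u, v} is a resolving set of G of cardinality 2q − 1; hence β(G) ≤ 2q − 1. -/
theorem stmt_16 {V : Type*} [Fintype V] (G : SimpleGraph V) [DecidableRel G.Adj]
    (q : ℕ) (hcard : Fintype.card V = q ^ 2 + q + 1)
    (hdiam : G.diam = 2) (hc4 : C4Free G)
    (hdeg : ∀ v : V, G.degree v = q ∨ G.degree v = q + 1)
    (u v : V) (hu : G.degree u = q) (hv : G.Adj u v) :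
    IsResolvingSet G ((G.neighborSet u ∪ G.neighborSet v) \ {u, v}) ∧
      ((G.neighborSet u ∪ G.neighborSet v) \ {u, v}).ncard = 2 * q - 1 := by
  classical
  have huv : u ≠ v := G.ne_of_adj hv
  have hq1 : 1 ≤ q := by
    rw [← hu]
    have h1 : v ∈ G.neighborFinset u := by simpa using hv
    have h2 := Finset.card_pos.mpr ⟨v, h1⟩
    rw [SimpleGraph.card_neighborFinset_eq_degree] at h2
    omega
  have hediam : G.ediam = 2 := by
    have h := hdiam
    rw [SimpleGraph.diam, ENat.toNat_eq_iff (by norm_num)] at h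
    exact_mod_cast h
  have hreach : ∀ x y : V, G.Reachable x y := fun x y =>
    SimpleGraph.reachable_of_edist_ne_top
      (ne_top_of_le_ne_top (by rw [hediam]; decide) G.edist_le_ediam)
  have hdist2 : ∀ x y : V, G.dist x y ≤ 2 := fun x y => by
    have h := SimpleGraph.dist_le_diam (G := G) (u := x) (v := y) (by rw [hediam]; decide)
    rwa [hdiam] at h
  have hdist0 : ∀ x y : V, G.dist x y = 0 ↔ x = y := fun x y => by
    rw [SimpleGraph.dist_eq_zero_iff_eq_or_not_reachable]
    simp [hreach x y]
  have hdisttwo : ∀ x y : V, x ≠ y → ¬G.Adj x y → G.dist x y = 2 := by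
    intro x y hne hna
    have h2 := hdist2 x y
    have h0 : G.dist x y ≠ 0 := fun h => hne ((hdist0 x y).mp h)
    have h1 : G.dist x y ≠ 1 := fun h => hna (SimpleGraph.dist_eq_one_iff_adj.mp h)
    omega
  -- common neighbor existence and uniqueness
  have hcn : ∀ x y : V, x ≠ y → ¬G.Adj x y → ∃ w, G.Adj x w ∧ G.Adj w y := by
    intro x y hne hna
    obtain ⟨p, hp⟩ := (hreach x y).exists_walk_length_eq_dist
    rw [hdisttwo x y hne hna] at hp
    refine ⟨p.getVert 1, ?_, ?_⟩
    · have h := p.adj_getVert_succ (i := 0) (by omega)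
      simpa using h
    · have h := p.adj_getVert_succ (i := 1) (by omega)
      have h2 : p.getVert (1 + 1) = y := by
        rw [show 1 + 1 = p.length by omega]
        exact p.getVert_length
      rwa [h2] at h
  have hcu : ∀ x y w w' : V, x ≠ y → G.Adj x w → G.Adj w y → G.Adj x w' → G.Adj w' y →
      w = w' := by
    intro x y w w' hne h1 h2 h3 h4
    by_contra hww
    exact hc4 x w y w' hne hww ⟨h1, h2, h4.symm, h3.symm⟩
  -- counting: every neighbor of u has degree q+1 and N(u) is independent
  set Nu : Finset V := insert u (G.neighborFinset u) with hNu
  have hmemNu : ∀ x, x ∈ Nu ↔ x = u ∨ G.Adj u x := by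
    intro x; simp [hNu]
  have hNucard : Nu.card = q + 1 := by
    rw [hNu, Finset.card_insert_of_notMem (by simp),
      SimpleGraph.card_neighborFinset_eq_degree, hu]
  set C' : Finset V := Finset.univ \ Nu with hC'
  have hC'card : C'.card = q ^ 2 := by
    rw [hC', Finset.card_sdiff_of_subset (Finset.subset_univ _), Finset.card_univ, hcard, hNucard]
    omega
  set f : V → V := fun x => if h : ∃ w, G.Adj u w ∧ G.Adj w x then h.choose else u with hfdef
  have hC'mem : ∀ x, x ∈ C' → x ≠ u ∧ ¬G.Adj u x := by
    intro x hx
    rw [hC', Finset.mem_sdiff] at hx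
    have := hx.2
    rw [hmemNu] at this
    push_neg at this
    exact this
  have hfspec : ∀ x ∈ C', G.Adj u (f x) ∧ G.Adj (f x) x := by
    intro x hx
    obtain ⟨hxu, hxa⟩ := hC'mem x hx
    have h : ∃ w, G.Adj u w ∧ G.Adj w x := hcn u x (Ne.symm hxu) hxa
    simp only [hfdef, dif_pos h]
    exact h.choose_spec
  have hfmem : ∀ x ∈ C', f x ∈ G.neighborFinset u := by
    intro x hx
    simpa using (hfspec x hx).1
  have hsum := Finset.card_eq_sum_card_fiberwise hfmem
  rw [hC'card] at hsum
  have hfiber : ∀ w ∈ G.neighborFinset u,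
      (C'.filter fun x => f x = w) = G.neighborFinset w \ Nu := by
    intro w hw
    have hadjuw : G.Adj u w := by simpa using hw
    ext x
    simp only [Finset.mem_filter, Finset.mem_sdiff, SimpleGraph.mem_neighborFinset, hC',
      Finset.mem_univ, true_and]
    constructor
    · rintro ⟨hx1, rfl⟩
      have hx : x ∈ C' := by rw [hC', Finset.mem_sdiff]; exact ⟨Finset.mem_univ _, hx1⟩
      exact ⟨(hfspec x hx).2, hx1⟩
    · rintro ⟨hwx, hx1⟩
      have hx : x ∈ C' := by rw [hC', Finset.mem_sdiff]; exact ⟨Finset.mem_univ _, hx1⟩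
      obtain ⟨hxu, _⟩ := hC'mem x hx
      refine ⟨hx1, ?_⟩
      exact hcu u x (f x) w (Ne.symm hxu) (hfspec x hx).1 (hfspec x hx).2 hadjuw hwx
  have hfibcard_le : ∀ w ∈ G.neighborFinset u,
      (C'.filter fun x => f x = w).card ≤ q := by
    intro w hw
    rw [hfiber w hw]
    have h1 : (G.neighborFinset w \ Nu).card + (G.neighborFinset w ∩ Nu).card
        = G.degree w := by
      rw [Finset.card_sdiff_add_card_inter, SimpleGraph.card_neighborFinset_eq_degree]
    have h2 : u ∈ G.neighborFinset w ∩ Nu := by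
      simp [hmemNu, (by simpa using hw : G.Adj u w).symm, hNu]
    have h3 : 1 ≤ (G.neighborFinset w ∩ Nu).card := Finset.card_pos.mpr ⟨u, h2⟩
    have h4 := hdeg w
    omega
  have hsum2 : ∑ w ∈ G.neighborFinset u, (C'.filter fun x => f x = w).card
      = ∑ w ∈ G.neighborFinset u, q := by
    rw [← hsum, Finset.sum_const, smul_eq_mul,
      SimpleGraph.card_neighborFinset_eq_degree, hu]
    ring
  have hfibcard_eq := (Finset.sum_eq_sum_iff_of_le hfibcard_le).mp hsum2
  have key : ∀ w, G.Adj u w → G.degree w = q + 1 ∧ ∀ a, G.Adj u a → ¬G.Adj w a := by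
    intro w hadjuw
    have hw : w ∈ G.neighborFinset u := by simpa using hadjuw
    have hq := hfibcard_eq w hw
    rw [hfiber w hw] at hq
    have h1 : (G.neighborFinset w \ Nu).card + (G.neighborFinset w ∩ Nu).card
        = G.degree w := by
      rw [Finset.card_sdiff_add_card_inter, SimpleGraph.card_neighborFinset_eq_degree]
    have h2 : u ∈ G.neighborFinset w ∩ Nu := by
      simp [hmemNu, hadjuw.symm, hNu]
    have h3 : 1 ≤ (G.neighborFinset w ∩ Nu).card := Finset.card_pos.mpr ⟨u, h2⟩
    have h4 := hdeg w
    have hdegw : G.degree w = q + 1 := by omega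
    have h5 : (G.neighborFinset w ∩ Nu).card = 1 := by omega
    refine ⟨hdegw, fun a hua hwa => ?_⟩
    have ha : a ∈ G.neighborFinset w ∩ Nu := by
      simp only [Finset.mem_inter, SimpleGraph.mem_neighborFinset, hmemNu]
      exact ⟨hwa, Or.inr hua⟩
    have : a = u := by
      have hsub := Finset.card_le_one.mp (le_of_eq h5)
      exact hsub a ha u h2
    exact G.ne_of_adj hua this.symm
  have hNuNv : ∀ a, G.Adj u a → ¬G.Adj v a := (key v hv).2
  have hdegv : G.degree v = q + 1 := (key v hv).1
  -- the set S
  set S : Set V := (G.neighborSet u ∪ G.neighborSet v) \ {u, v} with hS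
  have hSmem : ∀ s, s ∈ S ↔ (G.Adj u s ∨ G.Adj v s) ∧ s ≠ u ∧ s ≠ v := by
    intro s
    simp [hS, Set.mem_diff, SimpleGraph.mem_neighborSet, not_or]
  -- cardinality
  have hcardS : S.ncard = 2 * q - 1 := by
    have hTS : S = ↑((G.neighborFinset u ∪ G.neighborFinset v) \ {u, v} : Finset V) := by
      ext s
      rw [hSmem]
      simp [not_or]
    rw [hTS, Set.ncard_coe_finset]
    have hdisj : Disjoint (G.neighborFinset u) (G.neighborFinset v) := by
      rw [Finset.disjoint_left]
      intro a ha hb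
      exact hNuNv a (by simpa using ha) (by simpa using hb)
    have hsub : ({u, v} : Finset V) ⊆ G.neighborFinset u ∪ G.neighborFinset v := by
      intro s hs
      simp only [Finset.mem_insert, Finset.mem_singleton] at hs
      rcases hs with rfl | rfl
      · simp [hv.symm]
      · simp [hv]
    rw [Finset.card_sdiff_of_subset hsub, Finset.card_union_of_disjoint hdisj,
      SimpleGraph.card_neighborFinset_eq_degree, SimpleGraph.card_neighborFinset_eq_degree,
      hu, hdegv, Finset.card_pair huv]
    omega
  refine ⟨?_, hcardS⟩
  -- resolving
  intro x y hxy
  by_contra hne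
  have hxS : x ∉ S := by
    intro hx
    have h := hxy x hx
    rw [(hdist0 x x).mpr rfl] at h
    exact hne ((hdist0 x y).mp h.symm)
  have hyS : y ∉ S := by
    intro hy
    have h := hxy y hy
    rw [(hdist0 y y).mpr rfl] at h
    exact hne ((hdist0 y x).mp h).symm
  have hadj : ∀ s ∈ S, (G.Adj s x ↔ G.Adj s y) := by
    intro s hs
    rw [← SimpleGraph.dist_eq_one_iff_adj, ← SimpleGraph.dist_eq_one_iff_adj, hxy s hs]
  have hclass : ∀ z, z ∉ S → z = u ∨ z = v ∨ (¬G.Adj u z ∧ ¬G.Adj v z ∧ z ≠ u ∧ z ≠ v) := by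
    intro z hz
    rw [hSmem] at hz
    push_neg at hz
    by_cases h1 : z = u
    · exact Or.inl h1
    by_cases h2 : z = v
    · exact Or.inr (Or.inl h2)
    have h3 := hz
    right; right
    constructor
    · intro ha
      exact h2 ((hz (Or.inl ha) h1))
    constructor
    · intro ha
      exact h2 ((hz (Or.inr ha) h1))
    exact ⟨h1, h2⟩
  -- helpers for "outside" vertices
  have hout : ∀ c, ¬G.Adj u c → ¬G.Adj v c → c ≠ u → c ≠ v →
      (∃ a, a ∈ S ∧ G.Adj u a ∧ G.Adj a c) ∧ (∃ b, b ∈ S ∧ G.Adj v b ∧ G.Adj b c ∧ ¬G.Adj u b) := by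
    intro c hcu hcv hcu' hcv'
    constructor
    · obtain ⟨a, ha1, ha2⟩ := hcn u c (Ne.symm hcu') hcu
      have hav : a ≠ v := by
        rintro rfl
        exact hcv ha2
      exact ⟨a, (hSmem a).mpr ⟨Or.inl ha1, G.ne_of_adj ha1 |>.symm, hav⟩, ha1, ha2⟩
    · obtain ⟨b, hb1, hb2⟩ := hcn v c (Ne.symm hcv') hcv
      have hbu : b ≠ u := by
        rintro rfl
        exact hcu hb2
      have hub : ¬G.Adj u b := fun h => hNuNv b h hb1
      exact ⟨b, (hSmem b).mpr ⟨Or.inr hb1, hbu, G.ne_of_adj hb1 |>.symm⟩, hb1, hb2, hub⟩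
  -- separating u from v
  have hsepuv : ∃ s ∈ S, G.Adj s v ∧ ¬G.Adj s u := by
    obtain ⟨b, hb, hbu⟩ := Finset.exists_mem_ne
      (by rw [SimpleGraph.card_neighborFinset_eq_degree, hdegv]; omega) u
      (s := G.neighborFinset v)
    have hvb : G.Adj v b := by simpa using hb
    have hub : ¬G.Adj u b := fun h => hNuNv b h hvb
    exact ⟨b, (hSmem b).mpr ⟨Or.inr hvb, hbu, G.ne_of_adj hvb |>.symm⟩, hvb.symm,
      fun h => hub h.symm⟩
  -- separating u from outside c
  have hsepuc : ∀ c, ¬G.Adj u c → ¬G.Adj v c → c ≠ u → c ≠ v →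
      ∃ s ∈ S, G.Adj s c ∧ ¬G.Adj s u := by
    intro c h1 h2 h3 h4
    obtain ⟨-, b, hbS, hvb, hbc, hub⟩ := hout c h1 h2 h3 h4
    exact ⟨b, hbS, hbc, fun h => hub h.symm⟩
  -- separating v from outside c
  have hsepvc : ∀ c, ¬G.Adj u c → ¬G.Adj v c → c ≠ u → c ≠ v →
      ∃ s ∈ S, G.Adj s c ∧ ¬G.Adj s v := by
    intro c h1 h2 h3 h4
    obtain ⟨⟨a, haS, hua, hac⟩, -⟩ := hout c h1 h2 h3 h4
    exact ⟨a, haS, hac, fun h => hNuNv a hua h.symm⟩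
  rcases hclass x hxS with rfl | rfl | hxC
  · rcases hclass y hyS with rfl | rfl | hyC
    · exact hne rfl
    · obtain ⟨s, hsS, h1, h2⟩ := hsepuv
      exact h2 ((hadj s hsS).mpr h1)
    · obtain ⟨s, hsS, h1, h2⟩ := hsepuc y hyC.1 hyC.2.1 hyC.2.2.1 hyC.2.2.2
      exact h2 ((hadj s hsS).mpr h1)
  · rcases hclass y hyS with rfl | rfl | hyC
    · obtain ⟨s, hsS, h1, h2⟩ := hsepuv
      exact h2 ((hadj s hsS).mp h1)
    · exact hne rfl
    · obtain ⟨s, hsS, h1, h2⟩ := hsepvc y hyC.1 hyC.2.1 hyC.2.2.1 hyC.2.2.2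
      exact h2 ((hadj s hsS).mpr h1)
  · rcases hclass y hyS with rfl | rfl | hyC
    · obtain ⟨s, hsS, h1, h2⟩ := hsepuc x hxC.1 hxC.2.1 hxC.2.2.1 hxC.2.2.2
      exact h2 ((hadj s hsS).mp h1)
    · obtain ⟨s, hsS, h1, h2⟩ := hsepvc x hxC.1 hxC.2.1 hxC.2.2.1 hxC.2.2.2
      exact h2 ((hadj s hsS).mp h1)
    · -- both outside: 4-cycle
      obtain ⟨⟨a, haS, hua, hax⟩, b, hbS, hvb, hbx, hub⟩ :=
        hout x hxC.1 hxC.2.1 hxC.2.2.1 hxC.2.2.2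
      have hay : G.Adj a y := (hadj a haS).mp hax
      have hby : G.Adj b y := (hadj b hbS).mp hbx
      have hab : a ≠ b := by
        rintro rfl
        exact hub hua
      exact hc4 x a y b hne hab ⟨hax.symm, hay, hby.symm, hbx⟩
end

section
/- In a k-regular Moore graph G of diameter 2 with k ≥ 3, for any vertex u and any set C of at most k−2 vertices of G, there exist two distinct vertices x, y ∈ N(u) such that d(c,x) = d(c,y) for every c ∈ C. -/
open SimpleGraph

lemma girth_le_cycle {V : Type*} (G : SimpleGraph V) {a : V} (w : G.Walk a a)
    (hw : w.IsCycle) (h5 : G.girth = 5) : 5 ≤ w.length := by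
  have h : G.egirth ≤ w.length := by
    apply iInf_le_of_le a
    apply iInf_le_of_le w
    exact iInf_le _ hw
  have : G.girth ≤ w.length := ENat.toNat_le_toNat h (by simp)
  omega

lemma no_triangle {V : Type*} (G : SimpleGraph V) (h5 : G.girth = 5)
    {a b c : V} (hab : G.Adj a b) (hbc : G.Adj b c) (hca : G.Adj c a) : False := by
  have w : G.Walk a a := Walk.cons hab (Walk.cons hbc (Walk.cons hca Walk.nil))
  have hcyc : (Walk.cons hab (Walk.cons hbc (Walk.cons hca Walk.nil)) : G.Walk a a).IsCycle := by
    simp [Walk.isCycle_def, Walk.isTrail_def, hab.ne, hbc.ne, hca.ne, hab.ne', hbc.ne', hca.ne']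
  have := girth_le_cycle G _ hcyc h5
  simp at this

lemma no_square {V : Type*} (G : SimpleGraph V) (h5 : G.girth = 5)
    {a b c d : V} (hab : G.Adj a b) (hbc : G.Adj b c) (hcd : G.Adj c d) (hda : G.Adj d a)
    (hac : a ≠ c) (hbd : b ≠ d) : False := by
  have hcyc : (Walk.cons hab (Walk.cons hbc (Walk.cons hcd (Walk.cons hda Walk.nil))) : G.Walk a a).IsCycle := by
    simp [Walk.isCycle_def, Walk.isTrail_def, hab.ne, hbc.ne, hcd.ne, hda.ne,
      hab.ne', hbc.ne', hcd.ne', hda.ne', hac, hbd, hac.symm, hbd.symm]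
  have := girth_le_cycle G _ hcyc h5
  simp at this


theorem stmt_19 {V : Type*} [Fintype V] (G : SimpleGraph V) [DecidableRel G.Adj]
    (k : ℕ) (hk : 3 ≤ k) (hreg : G.IsRegularOfDegree k)
    (hgirth : G.girth = 5) (hdiam : G.diam = 2)
    (u : V) (C : Finset V) (hC : C.card ≤ k - 2) :
    ∃ x y : V, x ∈ G.neighborSet u ∧ y ∈ G.neighborSet u ∧ x ≠ y ∧
      ∀ c ∈ C, G.dist c x = G.dist c y := by
  classical
  have hne : Nonempty V := ⟨u⟩
  have hnt : G.ediam ≠ ⊤ := G.ediam_ne_top_of_diam_ne_zero (by omega)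
  have hconn : G.Connected := by
    by_contra h
    exact hnt (G.ediam_eq_top_of_not_connected h)
  have hdle : ∀ a b : V, G.dist a b ≤ 2 := fun a b => hdiam ▸ G.dist_le_diam hnt
  -- key: for c ≠ u, at most one neighbor of u has dist ≠ 2 from c
  have key : ∀ c : V, c ≠ u → ∀ x y : V, G.Adj u x → G.Adj u y → x ≠ y →
      G.dist c x ≠ 2 → G.dist c y ≠ 2 → False := by
    intro c hcu x y hux huy hxy hdx hdy
    have hx2 := hdle c x; have hy2 := hdle c y
    have hx1 : G.dist c x ≤ 1 := by omega
    have hy1 : G.dist c y ≤ 1 := by omega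
    rcases Nat.lt_or_ge (G.dist c x) 1 with h0 | h1
    · have hcx : c = x := (hconn.dist_eq_zero_iff).mp (by omega)
      rcases Nat.lt_or_ge (G.dist c y) 1 with h0' | h1'
      · exact hxy (hcx ▸ (hconn.dist_eq_zero_iff).mp (by omega))
      · have hadj : G.Adj c y := SimpleGraph.dist_eq_one_iff_adj.mp (le_antisymm hy1 h1')
        exact no_triangle G hgirth hux (hcx ▸ hadj) huy.symm
    · have hadjx : G.Adj c x := SimpleGraph.dist_eq_one_iff_adj.mp (le_antisymm hx1 h1)
      rcases Nat.lt_or_ge (G.dist c y) 1 with h0' | h1'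
      · have hcy : c = y := (hconn.dist_eq_zero_iff).mp (by omega)
        exact no_triangle G hgirth huy (hcy ▸ hadjx) hux.symm
      · have hadjy : G.Adj c y := SimpleGraph.dist_eq_one_iff_adj.mp (le_antisymm hy1 h1')
        exact no_square G hgirth hadjx hux.symm huy hadjy.symm hcu hxy
  set N := G.neighborFinset u with hN
  have hNcard : N.card = k := hreg u ▸ G.card_neighborFinset_eq_degree u ▸ rfl
  set M := C.biUnion (fun c => N.filter (fun x => c ≠ u ∧ G.dist c x ≠ 2)) with hM
  have hMcard : M.card ≤ C.card := by
    apply le_trans (Finset.card_biUnion_le)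
    apply le_trans (Finset.sum_le_card_nsmul C _ 1 ?_) (by simp)
    intro c _
    apply Finset.card_le_one.mpr
    intro x hx y hy
    simp only [Finset.mem_filter, hN, mem_neighborFinset] at hx hy
    by_contra hxy
    exact key c hx.2.1 x y hx.1 hy.1 hxy hx.2.2 hy.2.2
  have hlt : 1 < (N \ M).card := by
    have := Finset.le_card_sdiff M N
    omega
  obtain ⟨x, hx, y, hy, hxy⟩ := Finset.one_lt_card.mp hlt
  simp only [Finset.mem_sdiff, hN, mem_neighborFinset] at hx hy
  refine ⟨x, y, hx.1, hy.1, hxy, fun c hc => ?_⟩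
  by_cases hcu : c = u
  · subst hcu
    rw [SimpleGraph.dist_eq_one_iff_adj.mpr hx.1, SimpleGraph.dist_eq_one_iff_adj.mpr hy.1]
  · have hx2 : G.dist c x = 2 := by
      by_contra h
      exact hx.2 (Finset.mem_biUnion.mpr ⟨c, hc, Finset.mem_filter.mpr ⟨(mem_neighborFinset G u x).mpr hx.1, hcu, h⟩⟩)
    have hy2 : G.dist c y = 2 := by
      by_contra h
      exact hy.2 (Finset.mem_biUnion.mpr ⟨c, hc, Finset.mem_filter.mpr ⟨(mem_neighborFinset G u y).mpr hy.1, hcu, h⟩⟩)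
    rw [hx2, hy2]
end
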